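/- arXiv:1811.00578 — 11 statements merged into one kernel-verified Lean document; each statement's English description precedes it below -/
import Mathlib

section
/- Let C = (A_i)_{i∈I} be a finite collection of finite nonempty sets and let c > 0. Assume that for each i ∈ I, at most c·|A_i| of the sets A_j (j ∈ I, including A_i itself) intersect A_i. Then there exists a subset J ⊆ I such that the sets (A_j)_{j∈J} are pairwise disjoint and |⋃_{j∈J} A_j| ≥ |I|/c. -/
/-!
Take a maximal pairwise disjoint subfamily `J`. By maximality every `A i` meets some `A j` with
`j ∈ J`, so `I` is covered by the sets `{i | A j ∩ A i ≠ ∅}`, `j ∈ J`, each of size at most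
`c * |A j|`. Summing over `J` and using disjointness gives `|I| ≤ c * |⋃ j ∈ J, A j|`.
-/

open Finset

theorem Finset.exists_pairwiseDisjoint_forall_exists_not_disjoint {ι α : Type*} [Finite ι]
    (A : ι → Finset α) (hne : ∀ i, (A i).Nonempty) :
    ∃ J : Finset ι, (J : Set ι).PairwiseDisjoint A ∧ ∀ i, ∃ j ∈ J, ¬Disjoint (A j) (A i) := by
  classical
  obtain ⟨J, hJ, hmax⟩ :=
    (Set.toFinite {J : Finset ι | (J : Set ι).PairwiseDisjoint A}).exists_maximal ⟨∅, by simp⟩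
  refine ⟨J, hJ, fun i => ?_⟩
  by_contra! hdisj
  have hinsert : (insert i J : Set ι).PairwiseDisjoint A :=
    hJ.insert fun j hj _ => (hdisj j hj).symm
  have hi : i ∈ J := hmax (by simpa using hinsert) (subset_insert i J) (mem_insert_self i J)
  exact (hne i).ne_empty (disjoint_self.mp (hdisj i hi))

theorem Finset.card_univ_le_sum_card_filter_of_forall_exists {ι : Type*} [Fintype ι]
    (J : Finset ι) (r : ι → ι → Prop) [DecidableRel r] (hcover : ∀ i, ∃ j ∈ J, r j i) :
    Fintype.card ι ≤ ∑ j ∈ J, #{i | r j i} := by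
  classical
  calc Fintype.card ι = #(univ : Finset ι) := rfl
    _ ≤ #(J.biUnion fun j => {i | r j i}) :=
        card_le_card fun i _ => by simpa using hcover i
    _ ≤ ∑ j ∈ J, #{i | r j i} := card_biUnion_le

theorem stmt3 {ι α : Type} [Fintype ι] [DecidableEq α] (A : ι → Finset α)
    (hne : ∀ i, (A i).Nonempty) (c : ℝ) (hc : 0 < c)
    (h : ∀ i, (Nat.card {j : ι // ((A i) ∩ (A j)).Nonempty} : ℝ) ≤ c * (A i).card) :
    ∃ J : Finset ι, (∀ j₁ ∈ J, ∀ j₂ ∈ J, j₁ ≠ j₂ → Disjoint (A j₁) (A j₂)) ∧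
      (Fintype.card ι : ℝ) / c ≤ ((J.biUnion A).card : ℝ) := by
  classical
  obtain ⟨J, hJ, hmeet⟩ := exists_pairwiseDisjoint_forall_exists_not_disjoint A hne
  refine ⟨J, hJ, ?_⟩
  have hcount : Fintype.card ι ≤ ∑ j ∈ J, #{i | (A j ∩ A i).Nonempty} :=
    card_univ_le_sum_card_filter_of_forall_exists J _ fun i => by
      simpa only [not_disjoint_iff_nonempty_inter] using hmeet i
  have hdeg (j : ι) : (#{i | (A j ∩ A i).Nonempty} : ℝ) ≤ c * #(A j) := by
    simpa only [Nat.card_eq_fintype_card, Fintype.card_subtype] using h j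
  rw [div_le_iff₀ hc, card_biUnion hJ]
  calc (Fintype.card ι : ℝ) ≤ ∑ j ∈ J, (#{i | (A j ∩ A i).Nonempty} : ℝ) := mod_cast hcount
    _ ≤ ∑ j ∈ J, c * #(A j) := sum_le_sum fun j _ => hdeg j
    _ = (∑ j ∈ J, #(A j) : ℕ) * c := by push_cast; rw [sum_mul]; simp only [mul_comm]
end

section
/- Let D ⊆ ℤ^m be a finite set with D ⊆ B^{L∞}(R) (all vectors have L∞-norm at most R), and let y ∈ ⟨D⟩ (the subgroup of ℤ^m generated by D). Then there exists a finite sequence x₁,…,x_N of elements of D ∪ (−D) such that y = Σ_{j=1}^N x_j, and for every 0 ≤ k ≤ N, ‖Σ_{j=1}^k x_j − (k/N)·y‖_∞ ≤ 2·|D|·R. -/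
/-!
Write `y = ∑ aᵢ wᵢ` with `aᵢ ∈ ℕ` and `wᵢ = ±vᵢ`, `vᵢ ∈ D`. The list uses `wᵢ` exactly `aᵢ` times,
in the order in which Jefferson's (D'Hondt's) method hands out `N = ∑ aᵢ` seats to parties with
`aᵢ` votes. That method satisfies lower quota: after `k` seats party `i` holds `nᵢ > k aᵢ / N - 1`
seats. So the weights `eᵢ = nᵢ - k aᵢ / N` exceed `-1` and sum to `0`, whence `∑ |eᵢ| ≤ 2 |D|`; and
the `k`-th partial sum minus `(k / N) y` is `∑ eᵢ wᵢ`, of sup norm at most `2 |D| R`.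
-/

/-- The `L∞` norm of an integer vector, as a natural number. -/
def normInf {m : ℕ} (v : Fin m → ℤ) : ℕ :=
  Finset.univ.sup fun i => (v i).natAbs

open Finset

namespace List

variable {ι M : Type*} [DecidableEq ι] [AddCommMonoid M]

theorem count_append_singleton (l : List ι) (i₀ : ι) :
    (fun i => (l ++ [i₀]).count i) = (fun i => l.count i) + Pi.single i₀ 1 := by
  ext i
  by_cases h : i = i₀
  · subst h; simp
  · simp [h, Ne.symm h]

variable [Fintype ι]

theorem sum_map_eq_sum_count_nsmul (l : List ι) (f : ι → M) :
    (l.map f).sum = ∑ i, l.count i • f i := by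
  rw [Finset.sum_list_map_count]
  refine Finset.sum_subset (subset_univ _) fun i _ hi => ?_
  rw [count_eq_zero_of_not_mem (by simpa using hi), zero_smul]

theorem sum_count_eq_length (l : List ι) : ∑ i, l.count i = l.length := by
  simpa using (l.sum_map_eq_sum_count_nsmul fun _ => (1 : ℕ)).symm

end List

section Jefferson

variable {ι : Type*} [Fintype ι] [DecidableEq ι]

/-- Every quotient `a i / n i` that won a seat is at least every pending quotient
`a j / (n j + 1)`. -/
def IsJeffersonApportionment (a n : ι → ℕ) : Prop :=
  ∀ i j, 0 < n i → a j * n i ≤ a i * (n j + 1)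

namespace IsJeffersonApportionment

variable {a n : ι → ℕ}

omit [DecidableEq ι] in
theorem lower_quota (h : IsJeffersonApportionment a n) (ha : 0 < ∑ j, a j) (i : ι) :
    (∑ j, n j) * a i < (∑ j, a j) * (n i + 1) := by
  set N := ∑ j, a j
  set k := ∑ j, n j
  by_contra! hi
  have hai : 0 < a i := by
    by_contra! h0
    simp only [Nat.le_zero.mp h0, mul_zero, Nat.le_zero, mul_eq_zero] at hi
    omega
  have hle : ∀ j, N * n j ≤ k * a j := fun j => by
    rcases (n j).eq_zero_or_pos with h0 | h0
    · simp [h0]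
    refine Nat.le_of_mul_le_mul_left ?_ hai
    calc a i * (N * n j) = N * (a i * n j) := by ring
      _ ≤ N * (a j * (n i + 1)) := Nat.mul_le_mul_left _ (h j i h0)
      _ = a j * (N * (n i + 1)) := by ring
      _ ≤ a j * (k * a i) := Nat.mul_le_mul_left _ hi
      _ = a i * (k * a j) := by ring
  have hlt : N * n i < k * a i := by nlinarith
  have : N * k < k * N := by
    simpa only [← Finset.mul_sum] using
      Finset.sum_lt_sum (fun j _ => hle j) ⟨i, mem_univ i, hlt⟩
  exact (this.trans_eq (mul_comm k N)).false

/-- A seat goes to the party with the largest pending quotient `a i / (n i + 1)`. -/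
theorem exists_add_single [Nonempty ι] (h : IsJeffersonApportionment a n) :
    ∃ i₀, IsJeffersonApportionment a (n + Pi.single i₀ 1) := by
  obtain ⟨i₀, -, hmax⟩ := Finset.exists_max_image univ
    (fun i => (a i : ℚ) / (n i + 1)) univ_nonempty
  have hmax : ∀ j, a j * (n i₀ + 1) ≤ a i₀ * (n j + 1) := fun j => by
    have := hmax j (mem_univ j)
    rw [div_le_div_iff₀ (by positivity) (by positivity)] at this
    exact_mod_cast this
  refine ⟨i₀, fun i j hi => ?_⟩
  by_cases hi₀ : i = i₀ <;> by_cases hj₀ : j = i₀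
  · simp [hi₀, hj₀, Nat.mul_le_mul_left]
  · simpa [hi₀, Pi.single_apply, hj₀] using hmax j
  · simp only [hj₀, Pi.add_apply, Pi.single_eq_same, Pi.single_apply, hi₀] at hi ⊢
    simpa using (h i i₀ hi).trans (Nat.mul_le_mul_left _ (Nat.le_succ _))
  · simpa [Pi.single_apply, hi₀, hj₀] using h i j (by simpa [Pi.single_apply, hi₀] using hi)

end IsJeffersonApportionment

theorem exists_list_isJeffersonApportionment_count_take [Nonempty ι] (a : ι → ℕ) (k : ℕ) :
    ∃ l : List ι, l.length = k ∧
      ∀ j ≤ k, IsJeffersonApportionment a fun i => (l.take j).count i := by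
  induction k with
  | zero => exact ⟨[], rfl, fun j _ i _ hi => by simp at hi⟩
  | succ k ih =>
    obtain ⟨l, hlen, hl⟩ := ih
    obtain ⟨i₀, hi₀⟩ := (hl k le_rfl).exists_add_single
    rw [List.take_of_length_le hlen.le] at hi₀
    refine ⟨l ++ [i₀], by simp [hlen], fun j hj => ?_⟩
    rcases hj.lt_or_eq with hj | rfl
    · rw [List.take_append_of_le_length (by omega)]
      exact hl j (by omega)
    · rwa [List.take_of_length_le (by simp [hlen]), List.count_append_singleton]

theorem exists_list_count_eq_and_lower_quota (a : ι → ℕ) :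
    ∃ l : List ι, (∀ i, l.count i = a i) ∧
      ∀ k ≤ l.length, ∀ i, (k : ℝ) * a i / l.length < (l.take k).count i + 1 := by
  set N := ∑ i, a i
  rcases N.eq_zero_or_pos with hN | hN
  · refine ⟨[], fun i => ?_, fun k hk i => by simp_all⟩
    simpa using ((Finset.sum_eq_zero_iff.mp hN) i (mem_univ i)).symm
  have : Nonempty ι := by
    by_contra! h
    simp [N] at hN
  obtain ⟨l, hlen, hl⟩ := exists_list_isJeffersonApportionment_count_take a N
  have hquota : ∀ k ≤ N, ∀ i, k * a i < N * ((l.take k).count i + 1) := fun k hk i => by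
    simpa [List.sum_count_eq_length, hlen, hk] using (hl k hk).lower_quota hN i
  have hcount : ∀ i, l.count i = a i := by
    have hle : ∀ i, a i ≤ l.count i := fun i => by
      have := hquota N le_rfl i
      rw [List.take_of_length_le hlen.le] at this
      exact Nat.lt_succ_iff.mp (Nat.lt_of_mul_lt_mul_left this)
    have hsum : ∑ i, a i = ∑ i, l.count i := by rw [List.sum_count_eq_length, hlen]
    exact fun i => ((Finset.sum_eq_sum_iff_of_le fun i _ => hle i).mp hsum i (mem_univ i)).symm
  refine ⟨l, hcount, fun k hk i => ?_⟩
  rw [hlen] at hk ⊢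
  rw [div_lt_iff₀ (by exact_mod_cast hN), mul_comm _ (N : ℝ)]
  exact_mod_cast hquota k hk i

end Jefferson

section PartialSums

variable {ι E : Type*} [Fintype ι] [SeminormedAddCommGroup E] [NormedSpace ℝ E]

/-- Since `|e| ≤ e + 2` for `e > -1`, the weights have total absolute value at most `2 |ι|`. -/
theorem norm_sum_smul_le_two_mul_card {e : ι → ℝ} (he : ∀ i, -1 < e i) (hsum : ∑ i, e i = 0)
    {v : ι → E} {R : ℝ} (hv : ∀ i, ‖v i‖ ≤ R) :
    ‖∑ i, e i • v i‖ ≤ 2 * Fintype.card ι * R := by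
  calc ‖∑ i, e i • v i‖ ≤ ∑ i, |e i| * R := by
        refine (norm_sum_le _ _).trans (Finset.sum_le_sum fun i _ => ?_)
        rw [norm_smul, Real.norm_eq_abs]
        exact mul_le_mul_of_nonneg_left (hv i) (abs_nonneg _)
    _ ≤ ∑ i, (e i + 2) * R := by
        gcongr with i
        · exact (norm_nonneg _).trans (hv i)
        · exact abs_le.mpr ⟨by linarith [he i], by linarith⟩
    _ = 2 * Fintype.card ι * R := by
        rw [← Finset.sum_mul, Finset.sum_add_distrib, hsum]
        simp [mul_comm]

variable [DecidableEq ι]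

theorem exists_list_norm_sum_take_sub_le (a : ι → ℕ) {v : ι → E} {R : ℝ}
    (hv : ∀ i, ‖v i‖ ≤ R) :
    ∃ l : List ι, (∀ i, l.count i = a i) ∧ ∀ k ≤ l.length,
      ‖((l.take k).map v).sum - ((k : ℝ) / l.length) • (l.map v).sum‖
        ≤ 2 * Fintype.card ι * R := by
  obtain ⟨l, hcount, hquota⟩ := exists_list_count_eq_and_lower_quota a
  refine ⟨l, hcount, fun k hk => ?_⟩
  set e : ι → ℝ := fun i => (l.take k).count i - k * a i / l.length
  have hsum : ∑ i, e i = 0 := by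
    have ha : ∑ i, (a i : ℝ) = l.length := by
      simp only [← hcount, ← Nat.cast_sum, List.sum_count_eq_length]
    simp only [e, Finset.sum_sub_distrib, ← Finset.sum_div, ← Finset.mul_sum, ha]
    rw [← Nat.cast_sum, List.sum_count_eq_length, List.length_take, min_eq_left hk,
      mul_div_cancel_of_imp fun h => by simp_all, sub_self]
  convert norm_sum_smul_le_two_mul_card (fun i => ?_) hsum hv using 2
  · simp only [List.sum_map_eq_sum_count_nsmul, hcount, e, Finset.smul_sum, sub_smul,
      Finset.sum_sub_distrib, ← Nat.cast_smul_eq_nsmul ℝ, smul_smul]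
    congr 1
    refine Finset.sum_congr rfl fun i _ => by ring_nf
  · have := hquota k hk i
    simp only [e]
    linarith

end PartialSums

theorem AddSubgroup.exists_sum_nsmul_eq_of_mem_closure {G : Type*} [AddCommGroup G]
    {D : Finset G} {y : G} (hy : y ∈ AddSubgroup.closure (D : Set G)) :
    ∃ (a : D → ℕ) (w : D → G), (∀ i, w i = i ∨ w i = -i) ∧ ∑ i, a i • w i = y := by
  obtain ⟨c, rfl⟩ := AddSubgroup.mem_closure_iff_of_fintype.mp hy
  refine ⟨fun i => (c i).natAbs, fun i => if 0 ≤ c i then i else -i, fun i => ?_, ?_⟩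
  · by_cases h : 0 ≤ c i <;> simp [h]
  · refine Finset.sum_congr rfl fun i _ => ?_
    dsimp only
    split_ifs with h
    · rw [← natCast_zsmul, Int.natAbs_of_nonneg h]
    · rw [smul_neg, ← natCast_zsmul, ← neg_smul, Int.ofNat_natAbs_of_nonpos (by omega), neg_neg]

theorem abs_apply_le_normInf {m : ℕ} (v : Fin m → ℤ) (t : Fin m) : |v t| ≤ normInf v := by
  rw [Int.abs_eq_natAbs, Nat.cast_le]
  exact Finset.le_sup (f := fun t => (v t).natAbs) (mem_univ t)

theorem stmt4 {m : ℕ} (R : ℕ) (D : Finset (Fin m → ℤ))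
    (hD : ∀ v ∈ D, normInf v ≤ R)
    (y : Fin m → ℤ) (hy : y ∈ AddSubgroup.closure (D : Set (Fin m → ℤ))) :
    ∃ l : List (Fin m → ℤ),
      (∀ x ∈ l, x ∈ D ∨ -x ∈ D) ∧ l.sum = y ∧
      ∀ k ≤ l.length, ∀ i : Fin m,
        |(((l.take k).sum) i : ℝ) - ((k : ℝ) / (l.length : ℝ)) * (y i : ℝ)|
          ≤ 2 * D.card * R := by
  classical
  obtain ⟨a, w, hw, rfl⟩ := AddSubgroup.exists_sum_nsmul_eq_of_mem_closure hy
  let toReal : (Fin m → ℤ) →+ (Fin m → ℝ) := (Int.castAddHom ℝ).compLeft (Fin m)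
  have hbound : ∀ i, ‖toReal (w i)‖ ≤ R := fun i => by
    refine (pi_norm_le_iff_of_nonneg R.cast_nonneg).mpr fun t => ?_
    have : |w i t| ≤ R := by
      have hi : |(i : Fin m → ℤ) t| ≤ R :=
        (abs_apply_le_normInf _ t).trans (by exact_mod_cast hD _ i.2)
      rcases hw i with h | h <;> simpa [h] using hi
    simpa [toReal] using (show (|w i t| : ℝ) ≤ R by exact_mod_cast this)
  obtain ⟨s, hcount, hnear⟩ := exists_list_norm_sum_take_sub_le a hbound
  refine ⟨s.map w, ?_, ?_, fun k hk t => ?_⟩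
  · simp only [List.mem_map]
    rintro x ⟨i, -, rfl⟩
    rcases hw i with h | h <;> simp [h]
  · simp [List.sum_map_eq_sum_count_nsmul, hcount]
  · rw [List.length_map] at hk ⊢
    have := (norm_le_pi_norm _ t).trans (hnear k hk)
    rw [List.sum_map_eq_sum_count_nsmul, List.sum_map_eq_sum_count_nsmul] at this
    rw [← List.map_take, List.sum_map_eq_sum_count_nsmul]
    simpa [toReal, hcount, Finset.sum_apply, Fintype.card_coe] using this
end

section
/- For R ∈ ℕ and a finite set D ⊆ ℤ^m with all elements of L∞-norm ≤ R, define [D]_R as the smallest subset of the L∞-ball of radius R in ℤ^m that contains D ∪ {0}, is closed under negation, and contains x₁ + x₂ whenever x₁, x₂ ∈ [D]_R and ‖x₁+x₂‖_∞ ≤ R. Then for any y ∈ ⟨D⟩ (the subgroup generated by D), y ∈ [D]_{2·|D|·R + ‖y‖_∞}. -/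
/-- The bounded-addition closure `[D]_R`: the smallest subset of the `L∞`-ball of radius `R`
containing `D ∪ {0}`, closed under negation, and closed under additions staying in the ball. -/
def boundedAdd {m : ℕ} (D : Set (Fin m → ℤ)) (R : ℕ) : Set (Fin m → ℤ) :=
  ⋂₀ {T : Set (Fin m → ℤ) |
    D ∪ {0} ⊆ T ∧ (∀ v ∈ T, normInf v ≤ R) ∧ (∀ v ∈ T, -v ∈ T) ∧
    ∀ v ∈ T, ∀ w ∈ T, normInf (v + w) ≤ R → v + w ∈ T}

/-!
Write `y = ∑ n v • v` over `v ∈ D` and walk from `0` to `y` in `N` rounds, where `N` bounds every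
`|n v|`: after round `t` the walk is at `s t = ∑ ⌊t n v / N⌋ • v`. Each coefficient moves by at most
one per round, so a round adds at most `|D|` vectors of `±D`, each of norm at most `R`. Since
`N • s t = t • y - ∑ (t n v mod N) • v`, every `s t` has norm at most `‖y‖ + |D| R`, hence all
intermediate points of the walk stay in the ball of radius `‖y‖ + 2 |D| R`.
-/

open Finset

lemma normInf_le_iff_norm_le {m : ℕ} {v : Fin m → ℤ} {C : ℕ} : normInf v ≤ C ↔ ‖v‖ ≤ C := by
  rw [normInf, Finset.sup_le_iff, pi_norm_le_iff_of_nonneg (Nat.cast_nonneg C)]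
  refine forall_congr' fun i => ?_
  rw [Int.norm_eq_abs, ← Int.cast_abs, ← Nat.cast_natAbs, Nat.cast_le]
  exact imp_iff_right (Finset.mem_univ i)

lemma norm_le_normInf {m : ℕ} (v : Fin m → ℤ) : ‖v‖ ≤ normInf v :=
  normInf_le_iff_norm_le.1 le_rfl

lemma norm_list_sum_le_length_mul {E : Type*} [SeminormedAddCommGroup E] {l : List E} {R : ℝ}
    (h : ∀ x ∈ l, ‖x‖ ≤ R) : ‖l.sum‖ ≤ l.length * R := by
  induction l with
  | nil => simp
  | cons x l ih =>
    rw [List.sum_cons, List.length_cons, Nat.cast_succ, add_one_mul, add_comm _ R]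
    exact (norm_add_le _ _).trans
      (add_le_add (h x List.mem_cons_self) (ih fun y hy => h y (List.mem_cons_of_mem x hy)))

lemma abs_succ_mul_ediv_sub_mul_ediv_le_one {n N : ℤ} (t : ℤ) (hN : 0 < N) (hn : |n| ≤ N) :
    |(t + 1) * n / N - t * n / N| ≤ 1 := by
  rw [abs_le] at hn ⊢
  have hup : (t + 1) * n / N ≤ (t * n + 1 * N) / N := Int.ediv_le_ediv hN (by linarith)
  have hlow : (t * n + (-1) * N) / N ≤ (t + 1) * n / N := Int.ediv_le_ediv hN (by linarith)
  rw [Int.add_mul_ediv_right _ _ hN.ne'] at hup hlow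
  constructor <;> linarith

section BoundedAdd

variable {m : ℕ} {D : Set (Fin m → ℤ)} {R : ℕ}

lemma zero_mem_boundedAdd : (0 : Fin m → ℤ) ∈ boundedAdd D R :=
  Set.mem_sInter.2 fun _ hT => hT.1 (Or.inr rfl)

lemma mem_boundedAdd_of_mem {v : Fin m → ℤ} (hv : v ∈ D) : v ∈ boundedAdd D R :=
  Set.mem_sInter.2 fun _ hT => hT.1 (Or.inl hv)

lemma neg_mem_boundedAdd {v : Fin m → ℤ} (hv : v ∈ boundedAdd D R) : -v ∈ boundedAdd D R :=
  Set.mem_sInter.2 fun T hT => hT.2.2.1 v (Set.mem_sInter.1 hv T hT)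

lemma add_mem_boundedAdd {v w : Fin m → ℤ} (hv : v ∈ boundedAdd D R) (hw : w ∈ boundedAdd D R)
    (hvw : normInf (v + w) ≤ R) : v + w ∈ boundedAdd D R :=
  Set.mem_sInter.2 fun T hT =>
    hT.2.2.2 v (Set.mem_sInter.1 hv T hT) w (Set.mem_sInter.1 hw T hT) hvw

lemma zsmul_mem_boundedAdd {c : ℤ} (hc : |c| ≤ 1) {v : Fin m → ℤ} (hv : v ∈ D) :
    c • v ∈ boundedAdd D R := by
  obtain rfl | rfl | rfl : c = -1 ∨ c = 0 ∨ c = 1 := by rw [abs_le] at hc; omega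
  · rw [neg_one_zsmul]
    exact neg_mem_boundedAdd (mem_boundedAdd_of_mem hv)
  · rw [zero_zsmul]
    exact zero_mem_boundedAdd
  · rw [one_zsmul]
    exact mem_boundedAdd_of_mem hv

lemma add_list_sum_mem_boundedAdd {s : Fin m → ℤ} {l : List (Fin m → ℤ)}
    (hs : s ∈ boundedAdd D R) (hl : ∀ x ∈ l, x ∈ boundedAdd D R)
    (hprefix : ∀ p, p <+: l → ‖s + p.sum‖ ≤ R) : s + l.sum ∈ boundedAdd D R := by
  induction l generalizing s with
  | nil => simpa using hs
  | cons x l ih =>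
    have hsx : s + x ∈ boundedAdd D R :=
      add_mem_boundedAdd hs (hl x List.mem_cons_self)
        (normInf_le_iff_norm_le.2 (by simpa using hprefix [x] (by simp)))
    rw [List.sum_cons, ← add_assoc]
    refine ih hsx (fun y hy => hl y (List.mem_cons_of_mem x hy)) fun p hp => ?_
    simpa [add_assoc] using hprefix (x :: p) (List.cons_prefix_cons.2 ⟨rfl, hp⟩)

end BoundedAdd

section RoundedPath

variable {m : ℕ} (S : Finset (Fin m → ℤ)) (n : (Fin m → ℤ) → ℤ) (N : ℕ)

def roundedPath (t : ℕ) : Fin m → ℤ :=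
  ∑ v ∈ S, ((t : ℤ) * n v / N) • v

lemma roundedPath_zero : roundedPath S n N 0 = 0 := by
  simp [roundedPath]

lemma roundedPath_self (hN : 0 < N) : roundedPath S n N N = ∑ v ∈ S, n v • v := by
  simp only [roundedPath, Int.mul_ediv_cancel_left _ (Int.natCast_ne_zero.2 hN.ne')]

lemma roundedPath_succ (t : ℕ) :
    roundedPath S n N (t + 1) = roundedPath S n N t +
      (S.toList.map fun v => (((t : ℤ) + 1) * n v / N - t * n v / N) • v).sum := by
  rw [Finset.sum_map_toList, roundedPath, roundedPath, ← Finset.sum_add_distrib]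
  refine Finset.sum_congr rfl fun v _ => ?_
  rw [← add_smul, add_sub_cancel, Nat.cast_succ]

lemma norm_roundedPath_le {R : ℝ} (hSR : ∀ v ∈ S, ‖v‖ ≤ R) (hN : 0 < N) {t : ℕ} (ht : t ≤ N) :
    ‖roundedPath S n N t‖ ≤ ‖∑ v ∈ S, n v • v‖ + #S * R := by
  set y := ∑ v ∈ S, n v • v
  have hNz : (0 : ℤ) < N := by exact_mod_cast hN
  have hrounding : (N : ℤ) • roundedPath S n N t = (t : ℤ) • y - ∑ v ∈ S, (t * n v % N) • v := by
    simp only [y, roundedPath, Finset.smul_sum, smul_smul, ← Finset.sum_sub_distrib, ← sub_smul,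
      Int.emod_def, sub_sub_cancel]
  have hremainder : ∀ v ∈ S, ‖(t * n v % N) • v‖ ≤ N * R := by
    intro v hv
    refine (norm_smul_le _ _).trans (mul_le_mul ?_ (hSR v hv) (norm_nonneg v) (Nat.cast_nonneg N))
    rw [Int.norm_eq_abs, ← Int.cast_abs, abs_of_nonneg (Int.emod_nonneg _ hNz.ne')]
    exact_mod_cast (Int.emod_lt_of_pos _ hNz).le
  have hbound : (N : ℝ) * ‖roundedPath S n N t‖ ≤ N * (‖y‖ + #S * R) := calc
    (N : ℝ) * ‖roundedPath S n N t‖ = ‖(N : ℤ) • roundedPath S n N t‖ := by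
      rw [norm_smul]; simp
    _ ≤ ‖(t : ℤ) • y‖ + ‖∑ v ∈ S, (t * n v % N) • v‖ := by rw [hrounding]; exact norm_sub_le _ _
    _ ≤ t * ‖y‖ + #S * (N * R) := by
      refine add_le_add (by rw [norm_smul]; simp) ?_
      simpa using norm_sum_le_of_le S hremainder
    _ ≤ N * (‖y‖ + #S * R) := by
      have : (t : ℝ) ≤ N := by exact_mod_cast ht
      nlinarith [norm_nonneg y]
  exact le_of_mul_le_mul_left hbound (by exact_mod_cast hN)

lemma roundedPath_mem_boundedAdd {R : ℕ} {D : Set (Fin m → ℤ)} (hSD : (S : Set (Fin m → ℤ)) ⊆ D)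
    (hSR : ∀ v ∈ S, ‖v‖ ≤ R) (hN : 0 < N) (hnN : ∀ v ∈ S, |n v| ≤ N) {t : ℕ} (ht : t ≤ N) :
    roundedPath S n N t ∈ boundedAdd D (2 * #S * R + normInf (∑ v ∈ S, n v • v)) := by
  induction t with
  | zero => exact roundedPath_zero S n N ▸ zero_mem_boundedAdd
  | succ t ih =>
    rw [roundedPath_succ]
    set l := S.toList.map fun v => (((t : ℤ) + 1) * n v / N - t * n v / N) • v
    have hcoeff : ∀ v ∈ S, |((t : ℤ) + 1) * n v / N - t * n v / N| ≤ 1 := fun v hv =>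
      abs_succ_mul_ediv_sub_mul_ediv_le_one _ (by exact_mod_cast hN) (hnN v hv)
    have hl : ∀ x ∈ l, ∃ v ∈ S, x = (((t : ℤ) + 1) * n v / N - t * n v / N) • v := by
      simp [l, eq_comm]
    refine add_list_sum_mem_boundedAdd (ih (by omega)) ?_ fun p hp => ?_
    · intro x hx
      obtain ⟨v, hv, rfl⟩ := hl x hx
      exact zsmul_mem_boundedAdd (hcoeff v hv) (hSD hv)
    have hp_norm : ∀ x ∈ p, ‖x‖ ≤ R := fun x hx => by
      obtain ⟨v, hv, rfl⟩ := hl x (hp.subset hx)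
      have hc : ‖((t : ℤ) + 1) * n v / N - t * n v / N‖ ≤ 1 := by
        rw [Int.norm_eq_abs, ← Int.cast_abs]
        exact_mod_cast hcoeff v hv
      simpa using (norm_smul_le _ _).trans (mul_le_mul hc (hSR v hv) (norm_nonneg v) zero_le_one)
    have hp_length : (p.length : ℝ) ≤ #S := by
      exact_mod_cast hp.length_le.trans (by simp [l])
    calc ‖roundedPath S n N t + p.sum‖
        ≤ ‖roundedPath S n N t‖ + ‖p.sum‖ := norm_add_le _ _
      _ ≤ (‖∑ v ∈ S, n v • v‖ + #S * R) + #S * R :=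
        add_le_add (norm_roundedPath_le S n N hSR hN (by omega))
          ((norm_list_sum_le_length_mul hp_norm).trans
            (mul_le_mul_of_nonneg_right hp_length (Nat.cast_nonneg R)))
      _ ≤ (2 * #S * R + normInf (∑ v ∈ S, n v • v) : ℕ) := by
        push_cast
        linarith [norm_le_normInf (∑ v ∈ S, n v • v)]

end RoundedPath

theorem sum_zsmul_mem_boundedAdd {m R : ℕ} {D : Set (Fin m → ℤ)} {S : Finset (Fin m → ℤ)}
    (hSD : (S : Set (Fin m → ℤ)) ⊆ D) (hSR : ∀ v ∈ S, normInf v ≤ R) (n : (Fin m → ℤ) → ℤ) :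
    ∑ v ∈ S, n v • v ∈ boundedAdd D (2 * #S * R + normInf (∑ v ∈ S, n v • v)) := by
  -- Any `N > 0` dominating every `|n v|` would do.
  set N := ∑ v ∈ S, (n v).natAbs + 1
  have hnN : ∀ v ∈ S, |n v| ≤ N := fun v hv => by
    rw [← Int.natCast_natAbs, Nat.cast_le]
    exact (Finset.single_le_sum (f := fun v => (n v).natAbs) (fun _ _ => Nat.zero_le _) hv).trans
      (Nat.le_succ _)
  have hN : 0 < N := Nat.succ_pos _
  have hpath := roundedPath_mem_boundedAdd S n N hSD
    (fun v hv => normInf_le_iff_norm_le.1 (hSR v hv)) hN hnN le_rfl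
  rwa [roundedPath_self S n N hN] at hpath

theorem stmt5 {m : ℕ} (R : ℕ) (D : Finset (Fin m → ℤ))
    (hD : ∀ v ∈ D, normInf v ≤ R)
    (y : Fin m → ℤ) (hy : y ∈ AddSubgroup.closure (D : Set (Fin m → ℤ))) :
    y ∈ boundedAdd (D : Set (Fin m → ℤ)) (2 * D.card * R + normInf y) := by
  rw [← Submodule.span_int_eq_addSubgroupClosure, Submodule.mem_toAddSubgroup] at hy
  obtain ⟨n, -, rfl⟩ := Submodule.mem_span_finset.1 hy
  exact sum_zsmul_mem_boundedAdd subset_rfl hD n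
end

section
/- Let D₀ ⊆ ℤ^m be an ordered linearly independent set of size k, and let I ⊆ [m] with |I| = m − k be a set of strongest coordinates for D₀, meaning |det(M_{D₀}^I)| ≥ |det(M_{D₀}^J)| for every J ⊆ [m] with |J| = m − k, where M_{D₀}^J is the m×k matrix of the vectors of D₀ with rows indexed by J deleted. Let D be the ordered basis of ℝ^m consisting of the vectors of D₀ followed by the standard basis vectors {e_i}_{i∈I}. Then every entry in the last (m−k) rows of the matrix M_D⁻¹ lies in the interval [−1, 1]. -/
/-- The matrix whose first `k` columns are the integer vectors `b` and whose remaining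
columns are the standard basis vectors indexed by `I` (in increasing order). -/
noncomputable def matOf (m k : ℕ) (hk : k ≤ m) (b : Fin k → Fin m → ℤ)
    (I : Finset (Fin m)) (hI : I.card = m - k) : Matrix (Fin m) (Fin m) ℝ :=
  Matrix.of fun i j =>
    if h : (j : ℕ) < k then ((b ⟨j, h⟩ i : ℤ) : ℝ)
    else if (↑(I.orderIsoOfFin hI ⟨(j : ℕ) - k, by have := j.isLt; omega⟩) : Fin m) = i
      then 1 else 0

/-- `|det M_{b}^J|`: absolute value of the determinant of the `k × k` matrix
obtained from the columns `b` by deleting the rows indexed by `J`. -/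
noncomputable def detAbs (m k : ℕ) (b : Fin k → Fin m → ℤ) (J : Finset (Fin m)) : ℝ :=
  if h : Jᶜ.card = k then
    |Matrix.det (Matrix.of fun i j : Fin k =>
      ((b j (↑(Jᶜ.orderIsoOfFin h i)) : ℤ) : ℝ))|
  else 0

/-!
Write `M = [B | E_I]`, where `E_I` consists of the standard basis vectors `e_i`, `i ∈ I`. The
row of `M⁻¹` belonging to the column `e_i` has, by Cramer's rule, entries `det M' / det M`, where
`M'` is `M` with `e_i` replaced by some `e_j`. Either `e_j` is already a column of `M`, so
`det M' = 0`, or `M' = [B | E_J]` up to column order, for `J = I - i + j`.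
Expanding along the standard basis columns, `|det [B | E_J]| = |det M_B^J|`, which is at most
`|det M_B^I| = |det M|` because `I` is a set of strongest coordinates.
-/

open Matrix Function

def augmentStdBasis {n ι κ R : Type*} [DecidableEq n] [CommRing R] (c : ι → n → R) (g : κ → n) :
    Matrix n (ι ⊕ κ) R :=
  of fun x => Sum.elim (fun j => c j x) (fun t => (Pi.single (g t) 1 : n → R) x)

section AugmentStdBasis

variable {n ι κ R : Type*} [DecidableEq n] [CommRing R]

lemma updateCol_submatrix_augmentStdBasis [DecidableEq κ] (c : ι → n → R) (g : κ → n)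
    (ψ : n ≃ ι ⊕ κ) {i : n} {t : κ} (hi : ψ i = Sum.inr t) (v : n) :
    ((augmentStdBasis c g).submatrix id ψ).updateCol i (Pi.single v 1) =
      (augmentStdBasis c (update g t v)).submatrix id ψ := by
  ext x y
  rcases hy : ψ y with j | s
  · have : y ≠ i := by rintro rfl; simp_all
    simp [augmentStdBasis, hy, this]
  · by_cases hs : s = t
    · subst hs
      obtain rfl : y = i := ψ.injective (hy.trans hi.symm)
      simp [augmentStdBasis, hy]
    · have : y ≠ i := by rintro rfl; simp_all
      simp [augmentStdBasis, hy, this, update_of_ne hs]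

lemma det_augmentStdBasis_submatrix_eq_zero [Fintype n] (c : ι → n → R) {g : κ → n}
    (hg : ¬ Injective g) (ψ : n ≃ ι ⊕ κ) : ((augmentStdBasis c g).submatrix id ψ).det = 0 := by
  obtain ⟨s, t, hst, hne⟩ := not_injective_iff.mp hg
  refine det_zero_of_column_eq (i := ψ.symm (Sum.inr s)) (j := ψ.symm (Sum.inr t)) (by simpa) ?_
  intro x
  simp [augmentStdBasis, hst]

lemma submatrix_augmentStdBasis_eq_fromBlocks [DecidableEq κ] (c : ι → n → R) (e : ι ⊕ κ ≃ n) :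
    (augmentStdBasis c (e ∘ Sum.inr)).submatrix e id =
      fromBlocks (of fun i j => c j (e (Sum.inl i))) 0 (of fun s j => c j (e (Sum.inr s))) 1 := by
  ext (i | s) (j | t) <;> simp [augmentStdBasis, Pi.single_apply, one_apply]

lemma abs_det_augmentStdBasis_submatrix [Fintype n] [Fintype ι] [DecidableEq ι] [Fintype κ]
    [DecidableEq κ] [LinearOrder R] [IsStrictOrderedRing R] (c : ι → n → R) {g : κ → n}
    (e : ι ⊕ κ ≃ n) (he : e ∘ Sum.inr = g) (ψ : n ≃ ι ⊕ κ) :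
    |((augmentStdBasis c g).submatrix id ψ).det| = |(of fun i j => c j (e (Sum.inl i))).det| := by
  subst he
  rw [← abs_det_submatrix_equiv_equiv e ψ.symm, submatrix_submatrix]
  simp [submatrix_augmentStdBasis_eq_fromBlocks]

end AugmentStdBasis

section Cramer

variable {n : Type*} [Fintype n] [DecidableEq n]

lemma adjugate_apply_eq_det_updateCol {R : Type*} [CommRing R] (A : Matrix n n R) (i j : n) :
    A.adjugate i j = (A.updateCol i (Pi.single j 1)).det := by
  rw [← cramer_apply, cramer_eq_adjugate_mulVec, mulVec_single_one]
  rfl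

lemma abs_inv_apply_le_one {K : Type*} [Field K] [LinearOrder K] [IsStrictOrderedRing K]
    {A : Matrix n n K} {i j : n} (h : |(A.updateCol i (Pi.single j 1)).det| ≤ |A.det|) :
    |A⁻¹ i j| ≤ 1 := by
  -- `inv_def` covers the singular case too, where `Ring.inverse 0 = 0`.
  rw [inv_def, Matrix.smul_apply, smul_eq_mul, Ring.inverse_eq_inv', abs_mul, abs_inv,
    adjugate_apply_eq_det_updateCol]
  exact inv_mul_le_one_of_le₀ h (abs_nonneg _)

end Cramer

def finSplit {m k : ℕ} (hk : k ≤ m) : Fin m ≃ Fin k ⊕ Fin (m - k) :=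
  (finCongr (Nat.add_sub_cancel' hk).symm).trans finSumFinEquiv.symm

lemma finSplit_apply {m k : ℕ} (hk : k ≤ m) (i : Fin m) :
    finSplit hk i = if h : (i : ℕ) < k then Sum.inl ⟨i, h⟩ else Sum.inr ⟨i - k, by omega⟩ := by
  simp only [finSplit, finSumFinEquiv, Fin.addCases, eq_rec_constant, Equiv.symm_mk,
    Equiv.trans_apply, finCongr_apply, Equiv.coe_fn_mk, Fin.val_cast, Fin.cast_cast]
  split_ifs <;> rfl

lemma matOf_eq_augmentStdBasis_submatrix {m k : ℕ} (hk : k ≤ m) (b : Fin k → Fin m → ℤ)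
    (I : Finset (Fin m)) (hI : I.card = m - k) :
    matOf m k hk b I hI =
      (augmentStdBasis (fun p q => (b p q : ℝ)) (I.orderEmbOfFin hI)).submatrix id
        (finSplit hk) := by
  ext x y
  rw [submatrix_apply, finSplit_apply]
  by_cases hy : (y : ℕ) < k <;> simp [matOf, augmentStdBasis, hy, Pi.single_apply, eq_comm]

lemma abs_det_augmentStdBasis_submatrix_eq_detAbs {m k : ℕ} (hk : k ≤ m)
    (b : Fin k → Fin m → ℤ) {g : Fin (m - k) → Fin m} (hg : Injective g) :
    |((augmentStdBasis (fun p q => (b p q : ℝ)) g).submatrix id (finSplit hk)).det| =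
      detAbs m k b (Finset.univ.image g) := by
  set J := Finset.univ.image g
  have hJc : Jᶜ.card = k := by
    rw [Finset.card_compl, Finset.card_image_of_injective _ hg, Finset.card_univ,
      Fintype.card_fin, Fintype.card_fin]
    omega
  set ρ := Jᶜ.orderEmbOfFin hJc
  have hρg : ∀ i t, ρ i ≠ g t := fun i t h =>
    Finset.mem_compl.mp (h ▸ Jᶜ.orderEmbOfFin_mem hJc i)
      (Finset.mem_image_of_mem g (Finset.mem_univ t))
  have hbij : Bijective (Sum.elim ρ g) :=
    (Fintype.bijective_iff_injective_and_card _).mpr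
      ⟨ρ.injective.sumElim hg hρg, by simp only [Fintype.card_sum, Fintype.card_fin]; omega⟩
  rw [abs_det_augmentStdBasis_submatrix (g := g) _ (Equiv.ofBijective _ hbij) rfl, detAbs,
    dif_pos hJc]
  rfl

theorem stmt7_general (m k : ℕ) (hk : k ≤ m) (b : Fin k → Fin m → ℤ)
    (I : Finset (Fin m)) (hI : I.card = m - k)
    (hstrong : ∀ J : Finset (Fin m), J.card = m - k → detAbs m k b J ≤ detAbs m k b I) :
    ∀ i j : Fin m, k ≤ (i : ℕ) →
      (matOf m k hk b I hI)⁻¹ i j ∈ Set.Icc (-1 : ℝ) 1 := by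
  intro i j hik
  set σ := I.orderEmbOfFin hI
  have hi : finSplit hk i = Sum.inr ⟨i - k, by omega⟩ := by
    rw [finSplit_apply, dif_neg (by omega)]
  have hdetM : |(matOf m k hk b I hI).det| = detAbs m k b I := by
    rw [matOf_eq_augmentStdBasis_submatrix,
      abs_det_augmentStdBasis_submatrix_eq_detAbs hk b σ.injective, Finset.image_orderEmbOfFin_univ]
  rw [Set.mem_Icc, ← abs_le]
  apply abs_inv_apply_le_one
  rw [hdetM, matOf_eq_augmentStdBasis_submatrix, updateCol_submatrix_augmentStdBasis _ _ _ hi]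
  by_cases hg : Injective (update σ ⟨i - k, by omega⟩ j)
  · rw [abs_det_augmentStdBasis_submatrix_eq_detAbs hk b hg]
    exact hstrong _
      (by rw [Finset.card_image_of_injective _ hg, Finset.card_univ, Fintype.card_fin])
  · rw [det_augmentStdBasis_submatrix_eq_zero _ hg, abs_zero]
    exact (abs_nonneg _).trans_eq hdetM

theorem stmt7 (m k : ℕ) (hk : k ≤ m) (b : Fin k → Fin m → ℤ)
    (hind : LinearIndependent ℝ fun i : Fin k => fun j : Fin m => ((b i j : ℤ) : ℝ))
    (I : Finset (Fin m)) (hI : I.card = m - k)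
    (hstrong : ∀ J : Finset (Fin m), J.card = m - k → detAbs m k b J ≤ detAbs m k b I) :
    ∀ i j : Fin m, k ≤ (i : ℕ) →
      (matOf m k hk b I hI)⁻¹ i j ∈ Set.Icc (-1 : ℝ) 1 :=
  stmt7_general m k hk b I hI hstrong
end

section
/- Let Λ be a group generated by a finite set S, let (X,x) and (Y,y) be pointed Λ-sets, and let P ⊆ Λ be a subset such that Stab_Λ(x) ∩ (P⁻¹P) ⊆ Stab_Λ(y) ∩ (P⁻¹P). Then the map F : P·x → P·y given by F(p·x) = p·y for p ∈ P is well-defined. Moreover, if additionally for some s ∈ S and p ∈ P we have Stab_Λ(x) ∩ (P⁻¹ · s p) = Stab_Λ(y) ∩ (P⁻¹ · s p), then F preserves the edge at p·x labeled s: either s·(p·x) ∉ P·x and s·(p·y) ∉ P·y, or s·(p·x) ∈ P·x, s·(p·y) ∈ P·y and F(s·(p·x)) = s·(p·y). -/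
theorem stmt9 {Λ X Y : Type} [Group Λ] [MulAction Λ X] [MulAction Λ Y]
    (S : Set Λ) (hgen : Subgroup.closure S = ⊤)
    (x : X) (y : Y) (P : Set Λ)
    (hstab : ∀ p₁ ∈ P, ∀ p₂ ∈ P, (p₁⁻¹ * p₂) • x = x → (p₁⁻¹ * p₂) • y = y) :
    -- F : P·x → P·y, F(p·x) = p·y, is well-defined:
    (∀ p₁ ∈ P, ∀ p₂ ∈ P, p₁ • x = p₂ • x → p₁ • y = p₂ • y) ∧
    -- edge preservation:
    ∀ s ∈ S, ∀ p ∈ P,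
      (∀ q ∈ P, ((q⁻¹ * (s * p)) • x = x ↔ (q⁻¹ * (s * p)) • y = y)) →
      ((∃ q ∈ P, q • x = s • p • x) ↔ (∃ q ∈ P, q • y = s • p • y)) ∧
      (∀ q ∈ P, q • x = s • p • x → q • y = s • p • y) := by
  have key : ∀ {Z : Type} [MulAction Λ Z] (z : Z) (a b : Λ),
      a • z = b • z ↔ (a⁻¹ * b) • z = z := by
    intro Z _ z a b
    rw [mul_smul, eq_comm, ← inv_smul_eq_iff]
  constructor
  · intro p₁ h₁ p₂ h₂ h
    have := hstab p₁ h₁ p₂ h₂ ((key x p₁ p₂).mp h)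
    exact (key y p₁ p₂).mpr this
  · intro s _ p _ hiff
    have hx : ∀ q, q • x = s • p • x ↔ (q⁻¹ * (s * p)) • x = x := by
      intro q; rw [← mul_smul]; exact key x q (s * p)
    have hy : ∀ q, q • y = s • p • y ↔ (q⁻¹ * (s * p)) • y = y := by
      intro q; rw [← mul_smul]; exact key y q (s * p)
    constructor
    · constructor
      · rintro ⟨q, hq, h⟩
        exact ⟨q, hq, (hy q).mpr ((hiff q hq).mp ((hx q).mp h))⟩
      · rintro ⟨q, hq, h⟩
        exact ⟨q, hq, (hx q).mpr ((hiff q hq).mpr ((hy q).mp h))⟩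
    · intro q hq h
      exact (hy q).mpr ((hiff q hq).mp ((hx q).mp h))
end

section
/- Let Λ be a group generated by a finite set S, let (X,x) and (Y,y) be pointed Λ-sets, and let P ⊆ Λ. Write S₁ = S ∪ {1_Λ}. Assume Stab_Λ(x) ∩ (P⁻¹·S₁·P) = Stab_Λ(y) ∩ (P⁻¹·S₁·P). Then the map F : P·x → P·y, F(p·x) = p·y, is a well-defined bijection, and for every s ∈ S and every point z ∈ P·x: s·z ∈ P·x if and only if s·F(z) ∈ P·y, and in that case F(s·z) = s·F(z). -/
theorem stmt10 {Λ X Y : Type} [Group Λ] [MulAction Λ X] [MulAction Λ Y]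
    (S : Set Λ) (hgen : Subgroup.closure S = ⊤)
    (x : X) (y : Y) (P : Set Λ)
    (h : ∀ p₁ ∈ P, ∀ p₂ ∈ P, ∀ s ∈ S ∪ {1},
      ((p₁⁻¹ * (s * p₂)) • x = x ↔ (p₁⁻¹ * (s * p₂)) • y = y)) :
    -- F : P·x → P·y, F(p·x) = p·y, is a well-defined bijection:
    (∀ p₁ ∈ P, ∀ p₂ ∈ P, (p₁ • x = p₂ • x ↔ p₁ • y = p₂ • y)) ∧
    -- and a subgraph isomorphism:
    ∀ s ∈ S, ∀ p ∈ P,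
      ((∃ q ∈ P, q • x = s • p • x) ↔ (∃ q ∈ P, q • y = s • p • y)) ∧
      (∀ q ∈ P, q • x = s • p • x ↔ q • y = s • p • y) := by
  have key : ∀ s ∈ S ∪ {1}, ∀ p ∈ P, ∀ q ∈ P,
      (q • x = s • p • x ↔ q • y = s • p • y) := by
    intro s hs p hp q hq
    have := h q hq p hp s hs
    rw [show (q • x = s • p • x) ↔ (s • p • x = q • x) from eq_comm,
        show (q • y = s • p • y) ↔ (s • p • y = q • y) from eq_comm]
    simpa [mul_smul, inv_smul_eq_iff] using this
  refine ⟨?_, ?_⟩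
  · intro p₁ hp₁ p₂ hp₂
    simpa using key 1 (Or.inr rfl) p₂ hp₂ p₁ hp₁
  · intro s hs p hp
    refine ⟨?_, fun q hq => key s (Or.inl hs) p hp q hq⟩
    constructor
    · rintro ⟨q, hq, hqx⟩
      exact ⟨q, hq, (key s (Or.inl hs) p hp q hq).mp hqx⟩
    · rintro ⟨q, hq, hqy⟩
      exact ⟨q, hq, (key s (Or.inl hs) p hp q hq).mpr hqy⟩
end

section
/- Let F_m be the free group on {ê₁,…,ê_m}, let E₀ = {[ê_i^{ε₁}, ê_j^{ε₂}] : i,j ∈ [m], ε₁,ε₂ ∈ {±1}} be the set of commutators of generators and their inverses, and let X be an F_m-set. Write X_{E₀} = {x ∈ X : w·x = x for all w ∈ E₀}. A word is called sorted if it is of the form ê₁^{a₁}⋯ê_m^{a_m}, and for w ∈ F_m let ŵ denote its sorted form (the unique sorted word with the same image in ℤ^m). Suppose x ∈ X and R ∈ ℕ are such that ŵ·x ∈ X_{E₀} for every sorted word ŵ with all exponents bounded by R in absolute value. Then for every w ∈ F_m of word-length at most R, w·x = ŵ·x. -/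
/-- The sorted word `ê₁^{a₁} ⋯ ê_m^{a_m}` in the free group on `Fin m`. -/
def sortedWord {m : ℕ} (a : Fin m → ℤ) : FreeGroup (Fin m) :=
  ((List.finRange m).map fun i => FreeGroup.of i ^ a i).prod

/-- The exponent vector of a word `w ∈ F_m`, i.e. its image in `ℤ^m`. -/
def expVec {m : ℕ} (w : FreeGroup (Fin m)) : Fin m → ℤ :=
  Multiplicative.toAdd
    ((FreeGroup.lift fun i => Multiplicative.ofAdd (Pi.single i (1 : ℤ))) w)

open scoped commutatorElement

/-! Moving one letter `ê_i^{±1}` into a sorted word `ŵ` means commuting it past each block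
`ê_j^{a_j}` with `j < i`, one letter `ê_j^{±1}` at a time. Each such swap takes place at a point
`ŵ'·x` with `ŵ'` sorted and exponents bounded by those already present, so the commutator relations
hypothesised there allow it. Inserting the letters of `w` one by one, from the right, gives
`w·x = ŵ·x`. -/

section CommuteOnOrbit

variable {G X : Type*} [Group G] [MulAction G X] {g h : G} {u : X}

theorem smul_smul_eq_of_commutatorElement_smul (hfix : ⁅g, h⁆ • h • g • u = h • g • u) :
    g • h • u = h • g • u := by
  rwa [smul_smul, smul_smul, commutatorElement_def,
    show g * h * g⁻¹ * h⁻¹ * h * g = g * h by group, mul_smul] at hfix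

theorem smul_pow_smul_comm (n : ℕ) (hfix : ∀ k ≤ n, ⁅g, h⁆ • h ^ k • g • u = h ^ k • g • u) :
    g • h ^ n • u = h ^ n • g • u := by
  induction n with
  | zero => simp
  | succ n ih =>
    have ih := ih fun k hk => hfix k (by omega)
    have hmove : h • h ^ n • g • u = h ^ (n + 1) • g • u := by rw [smul_smul, ← pow_succ']
    calc g • h ^ (n + 1) • u = g • h • h ^ n • u := by rw [pow_succ', mul_smul]
      _ = h • g • h ^ n • u :=
        smul_smul_eq_of_commutatorElement_smul (by rw [ih, hmove]; exact hfix _ le_rfl)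
      _ = h ^ (n + 1) • g • u := by rw [ih, hmove]

theorem smul_zpow_smul_comm (n : ℤ)
    (hfix : ∀ k : ℤ, |k| ≤ |n| → ∀ ε : ℤ, (ε = 1 ∨ ε = -1) →
      ⁅g, h ^ ε⁆ • h ^ k • g • u = h ^ k • g • u) :
    g • h ^ n • u = h ^ n • g • u := by
  obtain ⟨n, rfl | rfl⟩ := Int.eq_nat_or_neg n
  · simp only [zpow_natCast]
    exact smul_pow_smul_comm n fun k hk => by
      simpa using hfix k (by simpa using hk) 1 (Or.inl rfl)
  · simp only [zpow_neg, zpow_natCast, ← inv_pow]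
    exact smul_pow_smul_comm n fun k hk => by
      simpa using hfix (-k) (by simpa using hk) (-1) (Or.inr rfl)

end CommuteOnOrbit

namespace FreeGroup

variable {α : Type*}

def sortedWordOn (L : List α) (a : α → ℤ) : FreeGroup α :=
  (L.map fun j => of j ^ a j).prod

@[simp]
theorem sortedWordOn_cons (j : α) (L : List α) (a : α → ℤ) :
    sortedWordOn (j :: L) a = of j ^ a j * sortedWordOn L a := by
  simp [sortedWordOn]

theorem sortedWordOn_congr {L : List α} {a b : α → ℤ} (h : ∀ j ∈ L, a j = b j) :
    sortedWordOn L a = sortedWordOn L b :=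
  congrArg List.prod <| List.map_congr_left fun j hj => by rw [h j hj]

theorem sortedWordOn_eq_one {L : List α} {a : α → ℤ} (h : ∀ j ∈ L, a j = 0) :
    sortedWordOn L a = 1 :=
  List.prod_eq_one <| by simp +contextual [h]

end FreeGroup

open FreeGroup

def InBox {α : Type*} (R : ℕ) (a : α → ℤ) : Prop :=
  ∀ i, |a i| ≤ (R : ℤ)

theorem InBox.mono {α : Type*} {R S : ℕ} {a : α → ℤ} (ha : InBox R a) (hRS : R ≤ S) :
    InBox S a :=
  fun i => (ha i).trans (by exact_mod_cast hRS)

variable {m : ℕ}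

theorem sortedWord_eq_sortedWordOn_of_suffix {L : List (Fin m)} {a : Fin m → ℤ}
    (hL : L <:+ List.finRange m) (ha : ∀ j ∉ L, a j = 0) :
    sortedWord a = sortedWordOn L a := by
  obtain ⟨pre, hpre⟩ := hL
  have hdisj := (List.nodup_append.1 (hpre ▸ List.nodup_finRange m)).2.2
  have hpre_one : sortedWordOn pre a = 1 :=
    sortedWordOn_eq_one fun j hj => ha j fun hjL => hdisj j hj j hjL rfl
  rw [sortedWord, ← hpre, List.map_append, List.prod_append]
  exact (congrArg (· * sortedWordOn L a) hpre_one).trans (one_mul _)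

theorem exists_inBox_sortedWord_eq_zpow_mul {R : ℕ} {j : Fin m} {L : List (Fin m)}
    (hL : j :: L <:+ List.finRange m) {a : Fin m → ℤ} (ha : InBox R a) {c : ℤ}
    (hc : |c| ≤ (R : ℤ)) :
    ∃ b, InBox R b ∧ sortedWord b = of j ^ c * sortedWordOn L a := by
  have hjL : j ∉ L := (List.nodup_cons.1 (hL.nodup (List.nodup_finRange m))).1
  refine ⟨Function.update (fun l => if l ∈ L then a l else 0) j c, fun l => ?_, ?_⟩
  · by_cases hl : l = j
    · subst hl; simpa using hc
    · rw [Function.update_of_ne hl]; split_ifs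
      · exact ha l
      · simp
  · rw [sortedWord_eq_sortedWordOn_of_suffix hL, sortedWordOn_cons, Function.update_self]
    · exact congrArg _ <| sortedWordOn_congr fun l hl => by
        rw [Function.update_of_ne (ne_of_mem_of_not_mem hl hjL), if_pos hl]
    · intro l hl
      obtain ⟨hlj, hlL⟩ := List.ne_and_not_mem_of_not_mem_cons hl
      rw [Function.update_of_ne hlj, if_neg hlL]

/-- `Box_{F_m}(R) · x ⊆ X_{E₀}`. -/
def BoxFixedByCommutators {X : Type*} (m : ℕ) [MulAction (FreeGroup (Fin m)) X] (x : X)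
    (R : ℕ) : Prop :=
  ∀ a : Fin m → ℤ, InBox R a →
    ∀ i j : Fin m, ∀ ε₁ ε₂ : ℤ, (ε₁ = 1 ∨ ε₁ = -1) → (ε₂ = 1 ∨ ε₂ = -1) →
      ⁅of i ^ ε₁, of j ^ ε₂⁆ • (sortedWord a • x) = sortedWord a • x

variable {X : Type*} [MulAction (FreeGroup (Fin m)) X]

section Insertion

variable {x : X} {R : ℕ} {i : Fin m} {e : ℤ} {a : Fin m → ℤ}

theorem zpow_smul_sortedWordOn_smul (hbox : BoxFixedByCommutators m x R) (he : e = 1 ∨ e = -1)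
    {L : List (Fin m)} (hL : L <:+ List.finRange m) (hi : i ∈ L) (ha : InBox R a)
    (ha' : InBox R (Pi.single i e + a)) :
    of i ^ e • sortedWordOn L a • x = sortedWordOn L (Pi.single i e + a) • x := by
  induction L with
  | nil => simp at hi
  | cons j L ih =>
    have hjL : j ∉ L := (List.nodup_cons.1 (hL.nodup (List.nodup_finRange m))).1
    have hL' : L <:+ List.finRange m := (List.suffix_cons j L).trans hL
    simp only [sortedWordOn_cons, mul_smul]
    by_cases hij : i = j
    · subst hij
      have htail : sortedWordOn L (Pi.single i e + a) = sortedWordOn L a :=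
        sortedWordOn_congr fun l hl => by simp [ne_of_mem_of_not_mem hl hjL]
      simp only [htail, smul_smul, ← mul_assoc, ← zpow_add, Pi.add_apply, Pi.single_eq_same]
    · have hiL : i ∈ L := (List.mem_cons.1 hi).resolve_left hij
      have ih := ih hL' hiL
      rw [Pi.add_apply, Pi.single_eq_of_ne (Ne.symm hij), zero_add, ← ih]
      refine smul_zpow_smul_comm (a j) fun k hk ε hε => ?_
      obtain ⟨b, hb, hbw⟩ := exists_inBox_sortedWord_eq_zpow_mul hL ha' (hk.trans (ha j))
      rw [ih, ← mul_smul (of j ^ k), ← hbw]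
      exact hbox b hb i j e ε he hε

theorem zpow_smul_sortedWord_smul (hbox : BoxFixedByCommutators m x R) (he : e = 1 ∨ e = -1)
    (ha : InBox R a) (ha' : InBox R (Pi.single i e + a)) :
    of i ^ e • sortedWord a • x = sortedWord (Pi.single i e + a) • x :=
  zpow_smul_sortedWordOn_smul hbox he List.suffix_rfl (List.mem_finRange i) ha ha'

end Insertion

theorem exists_mk_cons_eq_zpow_mul {α : Type*} (p : α × Bool) (L : List (α × Bool)) :
    ∃ e : ℤ, (e = 1 ∨ e = -1) ∧ mk (p :: L) = of p.1 ^ e * mk L := by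
  rw [← List.singleton_append, ← mul_mk]
  rcases p with ⟨i, _ | _⟩
  · exact ⟨-1, Or.inr rfl, by rw [zpow_neg_one, of, inv_mk]; rfl⟩
  · exact ⟨1, Or.inl rfl, by rw [zpow_one]; rfl⟩

theorem expVec_zpow_mul (i : Fin m) (e : ℤ) (w : FreeGroup (Fin m)) :
    expVec (of i ^ e * w) = Pi.single i e + expVec w := by
  simp [expVec, toAdd_zpow, ← Pi.single_smul]

theorem inBox_length_expVec_mk (L : List (Fin m × Bool)) : InBox L.length (expVec (mk L)) := by
  induction L with
  | nil => simp [InBox, expVec, ← one_eq_mk]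
  | cons p L ih =>
    obtain ⟨e, he, h⟩ := exists_mk_cons_eq_zpow_mul p L
    intro j
    have hsingle : |(Pi.single p.1 e : Fin m → ℤ) j| ≤ 1 := by
      rcases he with rfl | rfl <;> by_cases hj : j = p.1 <;> simp [hj]
    rw [h, expVec_zpow_mul, Pi.add_apply, List.length_cons, Nat.cast_succ, add_comm _ (1 : ℤ)]
    exact (abs_add_le _ _).trans (add_le_add hsingle (ih j))

theorem mk_smul_eq_sortedWord_expVec_smul {x : X} {R : ℕ} (hbox : BoxFixedByCommutators m x R)
    (L : List (Fin m × Bool)) (hL : L.length ≤ R) :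
    mk L • x = sortedWord (expVec (mk L)) • x := by
  induction L with
  | nil => simp [expVec, sortedWord, ← one_eq_mk]
  | cons p L ih =>
    obtain ⟨e, he, h⟩ := exists_mk_cons_eq_zpow_mul p L
    have hbound := (inBox_length_expVec_mk (p :: L)).mono hL
    rw [h, expVec_zpow_mul] at hbound ⊢
    have hL : L.length ≤ R := Nat.le_of_succ_le hL
    rw [mul_smul, ih hL, zpow_smul_sortedWord_smul hbox he ((inBox_length_expVec_mk L).mono hL)
      hbound]

theorem stmt11 {m : ℕ} {X : Type} [MulAction (FreeGroup (Fin m)) X]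
    (x : X) (R : ℕ)
    (hbox : ∀ a : Fin m → ℤ, (∀ i, |a i| ≤ (R : ℤ)) →
      ∀ i j : Fin m, ∀ ε₁ ε₂ : ℤ, (ε₁ = 1 ∨ ε₁ = -1) → (ε₂ = 1 ∨ ε₂ = -1) →
        ⁅FreeGroup.of i ^ ε₁, FreeGroup.of j ^ ε₂⁆ • (sortedWord a • x)
          = sortedWord a • x) :
    ∀ w : FreeGroup (Fin m), (FreeGroup.toWord w).length ≤ R →
      w • x = sortedWord (expVec w) • x := by
  intro w hw
  simpa only [mk_toWord] using mk_smul_eq_sortedWord_expVec_smul hbox w.toWord hw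
end

section
/- Let S be a finite generating set of a group Λ, let E ⊆ FreeGroup(S) be a finite set generating the kernel of the natural surjection FreeGroup(S) → Λ as a normal subgroup. Let X be a finite FreeGroup(S)-set, Y a finite Λ-set, and f : Y → X an injective map. Define Eq(f) = {y ∈ Y : for all s ∈ S, f(s·y) = s·f(x)} (where s acts on X via the free group). Then the global defect satisfies G_E(X) ≤ |S| · (1 − |Eq(f)|/|X|). -/
private lemma stmt12_aux_gf {Y X : Type} (f : Y → X) (hf : Function.Injective f)
    [DecidablePred (· ∈ Set.range f)] (y : Y) :
    ((Equiv.sumCompl (· ∈ Set.range f)).symm.trans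
      (Equiv.sumCongr (Equiv.ofInjective f hf).symm (Equiv.refl _))) (f y) = Sum.inl y := by
  have h1 : (((Equiv.sumCompl (· ∈ Set.range f)).symm.trans
      (Equiv.sumCongr (Equiv.ofInjective f hf).symm (Equiv.refl _))).symm (Sum.inl y)) = f y := by
    simp [Equiv.sumCongr_symm, Equiv.sumCongr_apply, Sum.map_inl, Equiv.sumCompl_apply_inl,
      Equiv.ofInjective_apply]
  rw [← h1, Equiv.apply_symm_apply]

private lemma stmt12_aux_rhoZ {Y W Λ : Type} [Group Λ] (ρ : Λ →* Equiv.Perm Y) (l : Λ) (y : Y) :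
    ((Equiv.Perm.sumCongrHom Y W).comp (ρ.prod 1)) l (Sum.inl y) = Sum.inl (ρ l y) := by
  simp [Equiv.Perm.sumCongrHom]

theorem stmt12 {S Λ X Y : Type} [Fintype S] [Fintype X] [Fintype Y] [Group Λ]
    (σ : S → Λ) (hgen : Subgroup.closure (Set.range σ) = ⊤)
    (E : Finset (FreeGroup S))
    (hE : Subgroup.normalClosure (E : Set (FreeGroup S)) = (FreeGroup.lift σ).ker)
    (ΦX : FreeGroup S →* Equiv.Perm X) (ρ : Λ →* Equiv.Perm Y)
    (f : Y → X) (hf : Function.Injective f) :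
    ∃ (Z : Type) (ρZ : Λ →* Equiv.Perm Z), Nat.card Z = Nat.card X ∧
      ∃ g : X ≃ Z,
        (Nat.card {p : S × X // g (ΦX (FreeGroup.of p.1) p.2) ≠ ρZ (σ p.1) (g p.2)} : ℝ)
            / Nat.card X
          ≤ Fintype.card S *
            (1 - (Nat.card {y : Y // ∀ s : S,
                f (ρ (σ s) y) = ΦX (FreeGroup.of s) (f y)} : ℝ) / Nat.card X) := by
  classical
  refine ⟨Y ⊕ {x : X // x ∉ Set.range f},
    (Equiv.Perm.sumCongrHom Y _).comp (ρ.prod 1), ?_, ?_⟩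
  · have e : (Y ⊕ {x : X // x ∉ Set.range f}) ≃ X :=
      (Equiv.sumCongr (Equiv.ofInjective f hf) (Equiv.refl _)).trans
        (Equiv.sumCompl (· ∈ Set.range f))
    exact Nat.card_congr e
  · refine ⟨((Equiv.sumCompl (· ∈ Set.range f)).symm.trans
      (Equiv.sumCongr (Equiv.ofInjective f hf).symm (Equiv.refl _))), ?_⟩
    have hgf : ∀ y : Y, ((Equiv.sumCompl (· ∈ Set.range f)).symm.trans
        (Equiv.sumCongr (Equiv.ofInjective f hf).symm (Equiv.refl _))) (f y) = Sum.inl y :=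
      fun y => stmt12_aux_gf f hf y
    have hρZinl : ∀ (l : Λ) (y : Y),
        ((Equiv.Perm.sumCongrHom Y {x : X // x ∉ Set.range f}).comp (ρ.prod 1)) l (Sum.inl y)
          = Sum.inl (ρ l y) := fun l y => stmt12_aux_rhoZ ρ l y
    set g := ((Equiv.sumCompl (· ∈ Set.range f)).symm.trans
      (Equiv.sumCongr (Equiv.ofInjective f hf).symm (Equiv.refl _)))
    set ρZ := (Equiv.Perm.sumCongrHom Y {x : X // x ∉ Set.range f}).comp (ρ.prod 1)
    set Eqs : Set Y := {y : Y | ∀ s : S, f (ρ (σ s) y) = ΦX (FreeGroup.of s) (f y)} with hEqs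
    have hgood : ∀ (s : S) (y : Y), y ∈ Eqs →
        g (ΦX (FreeGroup.of s) (f y)) = ρZ (σ s) (g (f y)) := by
      intro s y hy
      rw [← hy s, hgf, hgf, hρZinl]
    set Bad := {p : S × X // g (ΦX (FreeGroup.of p.1) p.2) ≠ ρZ (σ p.1) (g p.2)}
    have hinj : ∃ F : Bad → S × {x : X // x ∉ f '' Eqs}, Function.Injective F := by
      refine ⟨fun p => ⟨p.1.1, ⟨p.1.2, ?_⟩⟩, ?_⟩
      · intro hmem
        obtain ⟨y, hy, hxy⟩ := hmem
        have h := hgood p.1.1 y hy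
        rw [hxy] at h
        exact p.2 h
      · rintro ⟨⟨s1, x1⟩, h1⟩ ⟨⟨s2, x2⟩, h2⟩ h
        simp only [Prod.mk.injEq, Subtype.mk.injEq] at h
        exact Subtype.ext (Prod.ext h.1 h.2)
    obtain ⟨F, hF⟩ := hinj
    have hcard1 : Nat.card Bad ≤ Fintype.card S * (Fintype.card X - Nat.card Eqs) := by
      calc Nat.card Bad ≤ Nat.card (S × {x : X // x ∉ f '' Eqs}) :=
            Nat.card_le_card_of_injective F hF
        _ = Fintype.card S * (Fintype.card X - Nat.card Eqs) := by
            rw [Nat.card_prod, Nat.card_eq_fintype_card, Nat.card_eq_fintype_card]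
            congr 1
            have : Fintype.card {x : X // x ∉ f '' Eqs} =
                Fintype.card X - Fintype.card {x : X // x ∈ f '' Eqs} :=
              Fintype.card_subtype_compl _
            rw [this]
            congr 1
            rw [← Nat.card_eq_fintype_card]
            exact Nat.card_image_of_injective hf _
    have hkN : Nat.card Eqs ≤ Fintype.card X := by
      have hex : ∃ F : Eqs → X, Function.Injective F := ⟨fun y => f y.1,
        fun a b h => Subtype.ext (hf h)⟩
      obtain ⟨F', hF'⟩ := hex
      simpa [Nat.card_eq_fintype_card] using Nat.card_le_card_of_injective F' hF'
    have hEq_card : Nat.card {y : Y // ∀ s : S,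
        f (ρ (σ s) y) = ΦX (FreeGroup.of s) (f y)} = Nat.card Eqs := rfl
    rw [hEq_card]
    rcases Nat.eq_zero_or_pos (Nat.card X) with h0 | hpos
    · have hB0 : Nat.card Bad = 0 := by
        have hXe : IsEmpty X := by
          rw [Nat.card_eq_fintype_card] at h0
          exact Fintype.card_eq_zero_iff.mp h0
        have : IsEmpty Bad := ⟨fun p => hXe.elim p.1.2⟩
        exact Nat.card_of_isEmpty
      rw [hB0, h0]
      simp
    · have hN : (0:ℝ) < (Nat.card X : ℝ) := by exact_mod_cast hpos
      have key : (Nat.card Bad : ℝ) ≤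
          (Fintype.card S : ℝ) * ((Nat.card X : ℝ) - (Nat.card Eqs : ℝ)) := by
        calc (Nat.card Bad : ℝ)
            ≤ ((Fintype.card S * (Fintype.card X - Nat.card Eqs) : ℕ) : ℝ) := by
              exact_mod_cast hcard1
          _ = (Fintype.card S : ℝ) * ((Nat.card X : ℝ) - (Nat.card Eqs : ℝ)) := by
              rw [Nat.cast_mul, Nat.cast_sub hkN]
              simp [Nat.card_eq_fintype_card]
      have h3 : (Fintype.card S : ℝ) * (1 - (Nat.card Eqs : ℝ) / (Nat.card X)) =
          ((Fintype.card S : ℝ) * ((Nat.card X : ℝ) - (Nat.card Eqs : ℝ))) / (Nat.card X) := by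
        rw [mul_div_assoc, sub_div, div_self hN.ne']
      rw [h3]
      gcongr
end

section
/- Let S be a finite set, E ⊆ FreeGroup(S) a finite subset, and let X and Y be finite FreeGroup(S)-sets with |X| = |Y| = n. Define the local defect L_E(X) = (1/n)·|{(x,w) ∈ X×E : w·x ≠ x}| and the distance d_S(X,Y) = min over bijections f : X → Y of (1/n)·|{(s,x) ∈ S×X : f(s·x) ≠ s·f(x)}|. Then L_E(Y) ≤ L_E(X) + (Σ_{w∈E} |w|) · d_S(X,Y), where |w| denotes the word length of w. -/
/-!
Call `x` a defect of `f` at `w` when `f (w • x) ≠ w • f x`. The defects of a product lie in a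
translate of the defects of the first factor together with the defects of the second, and
inversion only translates them, so a word of length `ℓ` has at most `ℓ` times as many defects as
there are defective pairs `(s, x)` with `s` a generator. Away from its defects, `f` carries the
points fixed by `w` to points fixed by `w`.
-/

open Finset Equiv

namespace Equiv

variable {X Y : Type*} [Fintype X] [DecidableEq Y]

def defect (f : X ≃ Y) (σ : Perm X) (τ : Perm Y) : Finset X :=
  univ.filter fun x => f (σ x) ≠ τ (f x)

variable (f : X ≃ Y)

@[simp]
lemma mem_defect {σ : Perm X} {τ : Perm Y} {x : X} :
    x ∈ f.defect σ τ ↔ f (σ x) ≠ τ (f x) := by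
  simp [defect]

@[simp]
lemma defect_one : f.defect 1 1 = ∅ := by
  ext; simp

lemma defect_mul_subset [DecidableEq X] (σ₁ σ₂ : Perm X) (τ₁ τ₂ : Perm Y) :
    f.defect (σ₁ * σ₂) (τ₁ * τ₂) ⊆
      (f.defect σ₁ τ₁).map σ₂.symm.toEmbedding ∪ f.defect σ₂ τ₂ := by
  intro x hx
  by_contra h
  simp only [mem_union, mem_map_equiv, symm_symm, mem_defect, not_or, not_not] at h hx
  simp [Perm.mul_apply, h.1, h.2] at hx

lemma card_defect_mul_le (σ₁ σ₂ : Perm X) (τ₁ τ₂ : Perm Y) :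
    #(f.defect (σ₁ * σ₂) (τ₁ * τ₂)) ≤ #(f.defect σ₁ τ₁) + #(f.defect σ₂ τ₂) := by
  classical
  exact (card_le_card (f.defect_mul_subset σ₁ σ₂ τ₁ τ₂)).trans <|
    (card_union_le _ _).trans_eq (by rw [card_map])

lemma defect_inv (σ : Perm X) (τ : Perm Y) :
    f.defect σ⁻¹ τ⁻¹ = (f.defect σ τ).map σ.toEmbedding := by
  ext x
  simp only [mem_defect, mem_map_equiv, ne_eq, Perm.inv_def, apply_symm_apply, eq_symm_apply]
  exact not_congr eq_comm

lemma card_defect_inv (σ : Perm X) (τ : Perm Y) :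
    #(f.defect σ⁻¹ τ⁻¹) = #(f.defect σ τ) := by
  rw [defect_inv, card_map]

lemma support_subset_map_support_union_defect [DecidableEq X] [Fintype Y]
    (σ : Perm X) (τ : Perm Y) :
    τ.support ⊆ (σ.support ∪ f.defect σ τ).map f.toEmbedding := by
  intro y hy
  by_contra h
  simp only [mem_map_equiv, mem_union, Perm.mem_support, mem_defect, not_or, not_not] at h hy
  rw [h.1, apply_symm_apply] at h
  exact hy h.2.symm

lemma card_support_le [DecidableEq X] [Fintype Y] (σ : Perm X) (τ : Perm Y) :
    #τ.support ≤ #σ.support + #(f.defect σ τ) :=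
  (card_le_card (f.support_subset_map_support_union_defect σ τ)).trans <|
    (card_map _).trans_le (card_union_le _ _)

end Equiv

lemma Equiv.Perm.natCard_ne_self_eq_card_support {Y : Type*} [Fintype Y] [DecidableEq Y]
    (τ : Perm Y) : Nat.card {y // τ y ≠ y} = #τ.support := by
  rw [Nat.card_eq_fintype_card, Fintype.card_subtype]
  rfl

namespace FreeGroup

variable {S X Y : Type*} [Fintype X] [DecidableEq Y]
  (ΦX : FreeGroup S →* Perm X) (ΦY : FreeGroup S →* Perm Y) (f : X ≃ Y)

lemma card_defect_mk_singleton_le {N : ℕ}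
    (hN : ∀ s, #(f.defect (ΦX (of s)) (ΦY (of s))) ≤ N) (p : S × Bool) :
    #(f.defect (ΦX (mk [p])) (ΦY (mk [p]))) ≤ N := by
  obtain ⟨s, _ | _⟩ := p
  · have : mk [(s, false)] = (of s)⁻¹ := by simp [inv_mk, of, invRev]
    rw [this, _root_.map_inv, _root_.map_inv, f.card_defect_inv]
    exact hN s
  · exact hN s

lemma card_defect_mk_le {N : ℕ} (hN : ∀ s, #(f.defect (ΦX (of s)) (ΦY (of s))) ≤ N) :
    ∀ L : List (S × Bool), #(f.defect (ΦX (mk L)) (ΦY (mk L))) ≤ L.length * N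
  | [] => by simp [← one_eq_mk]
  | p :: L => by
    rw [show mk (p :: L) = mk [p] * mk L from (mul_mk (L₁ := [p])).symm, _root_.map_mul,
      _root_.map_mul, List.length_cons, add_one_mul, add_comm]
    exact (f.card_defect_mul_le _ _ _ _).trans <|
      add_le_add (card_defect_mk_singleton_le ΦX ΦY f hN p) (card_defect_mk_le hN L)

variable [Fintype S]

lemma card_defect_of_le (s : S) :
    #(f.defect (ΦX (of s)) (ΦY (of s))) ≤
      Nat.card {p : S × X // f (ΦX (of p.1) p.2) ≠ ΦY (of p.1) (f p.2)} := by
  rw [defect, ← Fintype.card_subtype, ← Nat.card_eq_fintype_card]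
  exact Nat.card_le_card_of_injective (fun x => ⟨(s, x), x.2⟩)
    fun x y h => Subtype.ext (congrArg (·.1.2) h)

lemma natCard_ne_self_le [DecidableEq S] [Fintype Y] (w : FreeGroup S) :
    Nat.card {y // ΦY w y ≠ y} ≤ Nat.card {x // ΦX w x ≠ x} +
      (toWord w).length * Nat.card {p : S × X // f (ΦX (of p.1) p.2) ≠ ΦY (of p.1) (f p.2)} := by
  classical
  rw [Perm.natCard_ne_self_eq_card_support, Perm.natCard_ne_self_eq_card_support]
  refine (f.card_support_le _ _).trans (Nat.add_le_add_left ?_ _)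
  simpa only [mk_toWord] using card_defect_mk_le ΦX ΦY f (card_defect_of_le ΦX ΦY f) (toWord w)

end FreeGroup

theorem stmt13_general {S X Y : Type} [Fintype S] [DecidableEq S] [Fintype X] [Fintype Y]
    (E : Finset (FreeGroup S))
    (ΦX : FreeGroup S →* Equiv.Perm X) (ΦY : FreeGroup S →* Equiv.Perm Y)
    (f : X ≃ Y) :
    (∑ w ∈ E, (Nat.card {y : Y // ΦY w y ≠ y} : ℝ)) / Fintype.card Y ≤
      (∑ w ∈ E, (Nat.card {x : X // ΦX w x ≠ x} : ℝ)) / Fintype.card X +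
      (∑ w ∈ E, ((FreeGroup.toWord w).length : ℝ)) *
        ((Nat.card {p : S × X //
            f (ΦX (FreeGroup.of p.1) p.2) ≠ ΦY (FreeGroup.of p.1) (f p.2)} : ℝ)
          / Fintype.card X) := by
  classical
  rw [← Fintype.card_congr f, mul_div_assoc', ← add_div, sum_mul, ← sum_add_distrib]
  gcongr with w
  exact_mod_cast FreeGroup.natCard_ne_self_le ΦX ΦY f w

theorem stmt13 {S X Y : Type} [Fintype S] [DecidableEq S] [Fintype X] [Fintype Y]
    (E : Finset (FreeGroup S))
    (ΦX : FreeGroup S →* Equiv.Perm X) (ΦY : FreeGroup S →* Equiv.Perm Y)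
    (hcard : Fintype.card X = Fintype.card Y) (f : X ≃ Y) :
    (∑ w ∈ E, (Nat.card {y : Y // ΦY w y ≠ y} : ℝ)) / Fintype.card Y ≤
      (∑ w ∈ E, (Nat.card {x : X // ΦX w x ≠ x} : ℝ)) / Fintype.card X +
      (∑ w ∈ E, ((FreeGroup.toWord w).length : ℝ)) *
        ((Nat.card {p : S × X //
            f (ΦX (FreeGroup.of p.1) p.2) ≠ ΦY (FreeGroup.of p.1) (f p.2)} : ℝ)
          / Fintype.card X) :=
  stmt13_general E ΦX ΦY f
end

section
/- Let S be a finite set, E ⊆ FreeGroup(S) a finite subset with E ≠ ∅ and E ≠ {1}, and Γ = FreeGroup(S)/⟪E⟫. For a finite FreeGroup(S)-set Y, let L_E(Y) be its local defect and G_E(Y) = min{d_S(Y,Z) : Z a Γ-set with |Z| = |Y|} its global defect. Then L_E(Y) ≤ (Σ_{w∈E}|w|) · G_E(Y) for every finite FreeGroup(S)-set Y. -/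
/-!
For a bijection `f : X ≃ Y` between two `G`-sets, the set of points where `f` fails to
intertwine the action of `a` is subadditive in `a` and invariant under `a ↦ a⁻¹` in size.
Hence for a word `w` in the free group its size is at most `|w|` times the number of
pairs `(s, x)` with `f (s • x) ≠ s • f x`. If the target is a `Γ`-set, a relator `w ∈ E`
acts trivially on it, so this set is exactly the set of points of `Y` moved by `w`;
summing over `E` gives the bound.
-/

open FreeGroup

section Mismatch

variable {G X Y : Type*} [Group G]
  (φ : G →* Equiv.Perm X) (ψ : G →* Equiv.Perm Y) (f : X ≃ Y)

def mismatchSet (a : G) : Set X := {x | f (φ a x) ≠ ψ a (f x)}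

theorem mismatchSet_mul_subset (a b : G) :
    mismatchSet φ ψ f (a * b) ⊆ mismatchSet φ ψ f b ∪ φ b ⁻¹' mismatchSet φ ψ f a := by
  intro x hx
  by_contra! h
  simp only [Set.mem_union, Set.mem_preimage, mismatchSet, Set.mem_ofPred_eq, not_or,
    not_not] at h
  apply hx
  rw [_root_.map_mul, _root_.map_mul, Equiv.Perm.mul_apply, Equiv.Perm.mul_apply, h.2, h.1]

theorem mismatchSet_inv (a : G) :
    mismatchSet φ ψ f a⁻¹ = φ a⁻¹ ⁻¹' mismatchSet φ ψ f a := by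
  ext x
  change f (φ a⁻¹ x) ≠ ψ a⁻¹ (f x) ↔ f (φ a (φ a⁻¹ x)) ≠ ψ a (f (φ a⁻¹ x))
  rw [_root_.map_inv, _root_.map_inv, ne_eq, ne_eq, Equiv.Perm.eq_inv_iff_eq, eq_comm]
  simp only [Equiv.Perm.coe_inv, Equiv.apply_symm_apply]

theorem mismatchSet_eq_of_map_eq_one {a : G} (ha : ψ a = 1) :
    mismatchSet φ ψ f a = {x | φ a x ≠ x} := by
  ext x
  simp [mismatchSet, ha]

theorem ncard_mismatchSet_inv (a : G) :
    (mismatchSet φ ψ f a⁻¹).ncard = (mismatchSet φ ψ f a).ncard := by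
  rw [mismatchSet_inv]
  exact Set.ncard_preimage_of_injective_subset_range (φ a⁻¹).injective (by simp)

variable [Finite X]

theorem ncard_mismatchSet_mul_le (a b : G) :
    (mismatchSet φ ψ f (a * b)).ncard ≤
      (mismatchSet φ ψ f a).ncard + (mismatchSet φ ψ f b).ncard := calc
  _ ≤ (mismatchSet φ ψ f b ∪ φ b ⁻¹' mismatchSet φ ψ f a).ncard :=
    Set.ncard_le_ncard (mismatchSet_mul_subset φ ψ f a b)
  _ ≤ (mismatchSet φ ψ f b).ncard + (φ b ⁻¹' mismatchSet φ ψ f a).ncard :=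
    Set.ncard_union_le _ _
  _ = _ := by
    rw [Set.ncard_preimage_of_injective_subset_range (φ b).injective (by simp), add_comm]

theorem ncard_mismatchSet_list_prod_le (l : List G) {M : ℕ}
    (hM : ∀ a ∈ l, (mismatchSet φ ψ f a).ncard ≤ M) :
    (mismatchSet φ ψ f l.prod).ncard ≤ l.length * M := by
  induction l with
  | nil => simp [mismatchSet]
  | cons a l ih =>
    rw [List.prod_cons, List.length_cons, Nat.succ_mul, add_comm (l.length * M)]
    exact (ncard_mismatchSet_mul_le φ ψ f a l.prod).trans
      (add_le_add (hM a List.mem_cons_self) (ih fun b hb => hM b (List.mem_cons_of_mem a hb)))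

end Mismatch

section FreeGroup

variable {S X Y : Type*}
  (φ : FreeGroup S →* Equiv.Perm X) (ψ : FreeGroup S →* Equiv.Perm Y) (f : X ≃ Y) [Finite X]

theorem ncard_mismatchSet_of_le_card_pairs [Finite S] (s : S) :
    (mismatchSet φ ψ f (of s)).ncard ≤
      Nat.card {p : S × X // f (φ (of p.1) p.2) ≠ ψ (of p.1) (f p.2)} := by
  rw [← Nat.card_coe_set_eq]
  exact Nat.card_le_card_of_injective (fun x => ⟨(s, x.1), x.2⟩)
    fun x y h => Subtype.ext (congrArg (·.1.2) h)

theorem ncard_mismatchSet_le_length_mul [DecidableEq S] (w : FreeGroup S) {M : ℕ}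
    (hM : ∀ s, (mismatchSet φ ψ f (of s)).ncard ≤ M) :
    (mismatchSet φ ψ f w).ncard ≤ w.toWord.length * M := by
  set l := w.toWord.map fun p => cond p.2 (of p.1) (of p.1)⁻¹
  have hl : l.prod = w := by
    rw [← lift_mk, lift_of_apply, mk_toWord]
  have hl_le : ∀ a ∈ l, (mismatchSet φ ψ f a).ncard ≤ M := by
    intro a ha
    obtain ⟨⟨s, b⟩, -, rfl⟩ := List.mem_map.1 ha
    cases b
    · exact (ncard_mismatchSet_inv φ ψ f (of s)).trans_le (hM s)
    · exact hM s
  calc (mismatchSet φ ψ f w).ncard = (mismatchSet φ ψ f l.prod).ncard := by rw [hl]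
    _ ≤ l.length * M := ncard_mismatchSet_list_prod_le φ ψ f l hl_le
    _ = w.toWord.length * M := by rw [List.length_map]

end FreeGroup

theorem stmt14_general {S Y : Type} [Fintype S] [DecidableEq S] [Fintype Y]
    (E : Finset (FreeGroup S))
    (ΦY : FreeGroup S →* Equiv.Perm Y)
    (ρ : (FreeGroup S ⧸ Subgroup.normalClosure (E : Set (FreeGroup S))) →* Equiv.Perm Y)
    (g : Equiv.Perm Y) :
    (∑ w ∈ E, (Nat.card {y : Y // ΦY w y ≠ y} : ℝ)) / Fintype.card Y ≤
      (∑ w ∈ E, ((FreeGroup.toWord w).length : ℝ)) *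
        ((Nat.card {p : S × Y //
            g (ΦY (FreeGroup.of p.1) p.2)
              ≠ ρ (QuotientGroup.mk (FreeGroup.of p.1)) (g p.2)} : ℝ)
          / Fintype.card Y) := by
  set ψ := ρ.comp (QuotientGroup.mk' _)
  set B := Nat.card {p : S × Y // g (ΦY (of p.1) p.2) ≠ ψ (of p.1) (g p.2)}
  have hrelator : ∀ w ∈ E, Nat.card {y : Y // ΦY w y ≠ y} ≤ w.toWord.length * B := by
    intro w hw
    have hψw : ψ w = 1 := by
      change ρ w = 1
      rw [(QuotientGroup.eq_one_iff w).2 (Subgroup.subset_normalClosure hw), _root_.map_one]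
    change Nat.card {y | ΦY w y ≠ y} ≤ _
    rw [Nat.card_coe_set_eq, ← mismatchSet_eq_of_map_eq_one ΦY ψ g hψw]
    exact ncard_mismatchSet_le_length_mul ΦY ψ g w (ncard_mismatchSet_of_le_card_pairs ΦY ψ g)
  have hsum : (∑ w ∈ E, (Nat.card {y : Y // ΦY w y ≠ y} : ℝ))
      ≤ (∑ w ∈ E, (w.toWord.length : ℝ)) * B := by
    rw [Finset.sum_mul]
    exact Finset.sum_le_sum fun w hw => by exact_mod_cast hrelator w hw
  rw [← mul_div_assoc]
  exact div_le_div_of_nonneg_right hsum (Nat.cast_nonneg _)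

theorem stmt14 {S Y : Type} [Fintype S] [DecidableEq S] [Fintype Y]
    (E : Finset (FreeGroup S)) (hE1 : E.Nonempty) (hE2 : E ≠ {1})
    (ΦY : FreeGroup S →* Equiv.Perm Y)
    (ρ : (FreeGroup S ⧸ Subgroup.normalClosure (E : Set (FreeGroup S))) →* Equiv.Perm Y)
    (g : Equiv.Perm Y) :
    (∑ w ∈ E, (Nat.card {y : Y // ΦY w y ≠ y} : ℝ)) / Fintype.card Y ≤
      (∑ w ∈ E, ((FreeGroup.toWord w).length : ℝ)) *
        ((Nat.card {p : S × Y //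
            g (ΦY (FreeGroup.of p.1) p.2)
              ≠ ρ (QuotientGroup.mk (FreeGroup.of p.1)) (g p.2)} : ℝ)
          / Fintype.card Y) :=
  stmt14_general E ΦY ρ g
end

section
/- Fix d ≥ 1 and t ≥ 2. Let X_t be the set (ℤ^d/tℤ^d) ∖ {[0]} with the action of the free group F_d on generators ê₁,…,ê_d given as follows: ê_i sends [(t−1)·e_i] to [e_i], and sends every other point [v] to [v + e_i]. Then for each pair 1 ≤ i < j ≤ d, the set of points x ∈ X_t with [ê_i,ê_j]·x ≠ x (where [a,b] = aba⁻¹b⁻¹) is exactly {[e_i], [e_j], [e_i + e_j]}. Consequently, the local defect of X_t with respect to E = {[ê_i,ê_j] : 1 ≤ i < j ≤ d} equals 3·binom(d,2)/(t^d − 1). -/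
/-!
Each generator `ê_i` acts on the punctured torus as translation by `e_i`, except that the one
point it would send to `0`, namely `-e_i`, is sent to `e_i` instead. Following a point `x`
through the four moves of `[ê_i, ê_j]`, this correction fires only when
`x ∈ {e_i, e_j, e_i + e_j}`, on which the commutator is the 3-cycle
`e_i ↦ e_i + e_j ↦ e_j ↦ e_i`; every other point is translated by `-e_j, -e_i, e_j, e_i` and
returns to itself. So each of the `binom(d, 2)` commutators moves exactly 3 of the `t^d - 1`
points.
-/

open scoped commutatorElement
open Finset

lemma Nat.card_subtype_ne_zero {G : Type*} [Zero G] [Fintype G] [DecidableEq G] :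
    Nat.card {v : G // v ≠ 0} = Nat.card G - 1 := by
  rw [Nat.card_eq_fintype_card, Nat.card_eq_fintype_card, Fintype.card_subtype_compl,
    Fintype.card_subtype_eq]

lemma Nat.card_subtype_prod_eq_mul {X ι : Type*} [Fintype X] [Fintype ι] (P : ι → Prop)
    [DecidablePred P] (M : X → ι → Prop) {k : ℕ} (hk : ∀ i, P i → Nat.card {x // M x i} = k) :
    Nat.card {p : X × ι // P p.2 ∧ M p.1 p.2} = k * #{i | P i} := by
  classical
  calc Nat.card {p : X × ι // P p.2 ∧ M p.1 p.2}
      = Nat.card (Σ i : {i // P i}, {x // M x i}) :=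
        Nat.card_congr
          { toFun := fun p => ⟨⟨p.1.2, p.2.1⟩, ⟨p.1.1, p.2.2⟩⟩
            invFun := fun q => ⟨(q.2.1, q.1.1), q.1.2, q.2.2⟩
            left_inv := fun _ => rfl
            right_inv := fun _ => rfl }
    _ = ∑ i : {i // P i}, Nat.card {x // M x i} := Nat.card_sigma
    _ = k * #{i | P i} := by
      rw [sum_congr rfl fun i _ => hk i.1 i.2, sum_const, Finset.card_univ, Fintype.card_subtype,
        smul_eq_mul, mul_comm]

namespace PuncturedShift

variable {G : Type*} [AddCommGroup G] [DecidableEq G]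

def shift (e x : G) : G := if x = -e then e else x + e

def unshift (e x : G) : G := if x = e then -e else x - e

lemma unshift_shift {e y : G} (hy : y ≠ 0) : unshift e (shift e y) = y := by
  unfold shift unshift
  split_ifs <;> grind

lemma shift_commutator {a b x : G} (ha : a ≠ 0) (hb : b ≠ 0) (hab : a ≠ b) (hab' : a + b ≠ 0)
    (hx : x ≠ 0) :
    shift a (shift b (unshift a (unshift b x))) =
      if x = a then a + b else if x = b then a else if x = a + b then b else x := by
  unfold shift unshift
  split_ifs <;> grind

lemma coe_inv_apply {σ : Equiv.Perm {v : G // v ≠ 0}} {e : G}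
    (hσ : ∀ x, (σ x : G) = shift e x) (x : {v : G // v ≠ 0}) :
    (σ⁻¹ x : G) = unshift e x := by
  rw [← unshift_shift (e := e) (σ⁻¹ x).2, ← hσ, Equiv.Perm.inv_def, Equiv.apply_symm_apply]

variable {σ τ : Equiv.Perm {v : G // v ≠ 0}} {a b : G}

lemma coe_commutatorElement_apply (hσ : ∀ x, (σ x : G) = shift a x)
    (hτ : ∀ x, (τ x : G) = shift b x) (x : {v : G // v ≠ 0}) :
    (⁅σ, τ⁆ x : G) = shift a (shift b (unshift a (unshift b x))) := by
  simp only [commutatorElement_def, Equiv.Perm.mul_apply, hσ, hτ, coe_inv_apply hσ,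
    coe_inv_apply hτ]

lemma commutatorElement_apply_ne_iff (hσ : ∀ x, (σ x : G) = shift a x)
    (hτ : ∀ x, (τ x : G) = shift b x) (ha : a ≠ 0) (hb : b ≠ 0) (hab : a ≠ b)
    (hab' : a + b ≠ 0) (x : {v : G // v ≠ 0}) :
    ⁅σ, τ⁆ x ≠ x ↔ (x : G) = a ∨ (x : G) = b ∨ (x : G) = a + b := by
  rw [ne_eq, Subtype.ext_iff, coe_commutatorElement_apply hσ hτ,
    shift_commutator ha hb hab hab' x.2]
  split_ifs <;> grind

lemma card_commutatorElement_moved [Fintype G] (hσ : ∀ x, (σ x : G) = shift a x)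
    (hτ : ∀ x, (τ x : G) = shift b x) (ha : a ≠ 0) (hb : b ≠ 0) (hab : a ≠ b)
    (hab' : a + b ≠ 0) :
    Nat.card {x : {v : G // v ≠ 0} // ⁅σ, τ⁆ x ≠ x} = 3 := by
  have hmoved (x : {v : G // v ≠ 0}) : ⁅σ, τ⁆ x ≠ x ↔ (x : G) ∈ ({a, b, a + b} : Finset G) := by
    rw [commutatorElement_apply_ne_iff hσ hτ ha hb hab hab']
    simp
  have hne_zero {x : G} (hx : x ∈ ({a, b, a + b} : Finset G)) : x ≠ 0 := by
    simp only [mem_insert, mem_singleton] at hx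
    grind
  rw [Nat.card_congr ((Equiv.subtypeEquivRight hmoved).trans
      (Equiv.subtypeSubtypeEquivSubtype hne_zero)),
    Nat.card_eq_fintype_card, Fintype.card_coe, card_eq_three]
  exact ⟨a, b, a + b, hab, by grind, by grind, rfl⟩

end PuncturedShift

theorem stmt15_general (d t : ℕ) (ht : 2 ≤ t)
    (Φ : FreeGroup (Fin d) →* Equiv.Perm {v : Fin d → ZMod t // v ≠ 0})
    (hΦ : ∀ (i : Fin d) (x : {v : Fin d → ZMod t // v ≠ 0}),
      (Φ (FreeGroup.of i) x : Fin d → ZMod t) =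
        if (x : Fin d → ZMod t) = Pi.single i ((t - 1 : ℕ) : ZMod t)
        then Pi.single i 1
        else (x : Fin d → ZMod t) + Pi.single i 1) :
    (∀ i j : Fin d, i < j → ∀ x : {v : Fin d → ZMod t // v ≠ 0},
      (Φ ⁅FreeGroup.of i, FreeGroup.of j⁆ x ≠ x ↔
        (x : Fin d → ZMod t) = Pi.single i 1 ∨
        (x : Fin d → ZMod t) = Pi.single j 1 ∨
        (x : Fin d → ZMod t) = Pi.single i 1 + Pi.single j 1)) ∧
    (Nat.card {p : {v : Fin d → ZMod t // v ≠ 0} × (Fin d × Fin d) //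
        p.2.1 < p.2.2 ∧ Φ ⁅FreeGroup.of p.2.1, FreeGroup.of p.2.2⁆ p.1 ≠ p.1} : ℝ) /
      Nat.card {v : Fin d → ZMod t // v ≠ 0}
      = 3 * (d.choose 2) / ((t : ℝ) ^ d - 1) := by
  have : Fact (1 < t) := ⟨ht⟩
  have hshift (i : Fin d) (x : {v : Fin d → ZMod t // v ≠ 0}) :
      (Φ (FreeGroup.of i) x : Fin d → ZMod t) = PuncturedShift.shift (Pi.single i 1) x := by
    rw [hΦ, Nat.cast_pred (by omega), ZMod.natCast_self, zero_sub, Pi.single_neg,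
      PuncturedShift.shift]
  have hbasis {i j : Fin d} (hij : i < j) :
      let e (k : Fin d) : Fin d → ZMod t := Pi.single k 1
      e i ≠ 0 ∧ e j ≠ 0 ∧ e i ≠ e j ∧ e i + e j ≠ 0 := by
    refine ⟨by simp, by simp, fun h => ?_, fun h => ?_⟩ <;> simpa [hij.ne] using congrFun h i
  refine ⟨fun i j hij x => ?_, ?_⟩
  · obtain ⟨hi, hj, hij', hsum⟩ := hbasis hij
    rw [map_commutatorElement]
    exact PuncturedShift.commutatorElement_apply_ne_iff (hshift i) (hshift j) hi hj hij' hsum x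
  · have hmoved (q : Fin d × Fin d) (hq : q.1 < q.2) :
        Nat.card {x // Φ ⁅FreeGroup.of q.1, FreeGroup.of q.2⁆ x ≠ x} = 3 := by
      obtain ⟨hi, hj, hij', hsum⟩ := hbasis hq
      rw [map_commutatorElement]
      exact PuncturedShift.card_commutatorElement_moved (hshift q.1) (hshift q.2) hi hj hij' hsum
    rw [Nat.card_subtype_prod_eq_mul (fun q : Fin d × Fin d => q.1 < q.2)
        (fun x q => Φ ⁅FreeGroup.of q.1, FreeGroup.of q.2⁆ x ≠ x) hmoved,
      Fintype.card_product_filter_lt, Fintype.card_fin, Nat.card_subtype_ne_zero]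
    simp [Nat.cast_sub (Nat.one_le_pow d t (by omega))]

theorem stmt15 (d t : ℕ) (hd : 1 ≤ d) (ht : 2 ≤ t) [NeZero t]
    (Φ : FreeGroup (Fin d) →* Equiv.Perm {v : Fin d → ZMod t // v ≠ 0})
    (hΦ : ∀ (i : Fin d) (x : {v : Fin d → ZMod t // v ≠ 0}),
      (Φ (FreeGroup.of i) x : Fin d → ZMod t) =
        if (x : Fin d → ZMod t) = Pi.single i ((t - 1 : ℕ) : ZMod t)
        then Pi.single i 1
        else (x : Fin d → ZMod t) + Pi.single i 1) :
    (∀ i j : Fin d, i < j → ∀ x : {v : Fin d → ZMod t // v ≠ 0},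
      (Φ ⁅FreeGroup.of i, FreeGroup.of j⁆ x ≠ x ↔
        (x : Fin d → ZMod t) = Pi.single i 1 ∨
        (x : Fin d → ZMod t) = Pi.single j 1 ∨
        (x : Fin d → ZMod t) = Pi.single i 1 + Pi.single j 1)) ∧
    (Nat.card {p : {v : Fin d → ZMod t // v ≠ 0} × (Fin d × Fin d) //
        p.2.1 < p.2.2 ∧ Φ ⁅FreeGroup.of p.2.1, FreeGroup.of p.2.2⁆ p.1 ≠ p.1} : ℝ) /
      Nat.card {v : Fin d → ZMod t // v ≠ 0}
      = 3 * (d.choose 2) / ((t : ℝ) ^ d - 1) :=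
  stmt15_general d t ht Φ hΦ
end
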